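/- arXiv:2304.12989 — 11 statements merged into one kernel-verified Lean document; each statement's English description precedes it below -/
import Mathlib

section
/- Let μ₁ and μ₂ be finite Borel measures on ℝ. If there exist real numbers a < b such that ∫ e^{-αt} dμ₁(t) = ∫ e^{-αt} dμ₂(t) < ∞ for all α ∈ (a,b), then μ₁ = μ₂. -/
/-!
Substituting `s = -α`, the hypothesis says that the moment generating functions
`s ↦ ∫ e^{s t} dμᵢ` are finite and equal on `(-b, -a)`. The complex moment generating functions
`z ↦ ∫ e^{z t} dμᵢ` are holomorphic on the strip `-b < re z < -a` and agree on its real points,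
so by the identity theorem they agree on the whole strip. On a vertical line `re z = c` of the
strip they are the characteristic functions of the finite measures `e^{c t} dμᵢ(t)`, which are
therefore equal; dividing by the density `e^{c t}` gives `μ₁ = μ₂`.
-/

open MeasureTheory Set
open scoped ENNReal

open Complex Filter Topology

namespace ProbabilityTheory

section

variable {Ω : Type*} {mΩ : MeasurableSpace Ω} {X : Ω → ℝ} {μ : Measure Ω}

lemma mgf_eq_toReal_lintegral (hX : AEMeasurable X μ) (t : ℝ) :
    mgf X μ t = (∫⁻ ω, ENNReal.ofReal (Real.exp (t * X ω)) ∂μ).toReal :=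
  integral_eq_lintegral_of_nonneg_ae (ae_of_all _ fun _ ↦ (Real.exp_pos _).le) (by fun_prop)

lemma mem_integrableExpSet_of_lintegral_lt_top (hX : AEMeasurable X μ) {t : ℝ}
    (h : ∫⁻ ω, ENNReal.ofReal (Real.exp (t * X ω)) ∂μ < ∞) : t ∈ integrableExpSet X μ :=
  ⟨by fun_prop, (hasFiniteIntegral_iff_ofReal (ae_of_all _ fun _ ↦ (Real.exp_pos _).le)).2 h⟩

variable {Ω' : Type*} {mΩ' : MeasurableSpace Ω'} {Y : Ω' → ℝ} {μ' : Measure Ω'} {a b : ℝ}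

lemma eqOn_complexMGF_of_eqOn_mgf (hab : a < b) (hX : Ioo a b ⊆ integrableExpSet X μ)
    (hY : Ioo a b ⊆ integrableExpSet Y μ') (h : EqOn (mgf X μ) (mgf Y μ') (Ioo a b)) :
    EqOn (complexMGF X μ) (complexMGF Y μ') {z | z.re ∈ Ioo a b} := by
  have hXan : AnalyticOnNhd ℂ (complexMGF X μ) {z | z.re ∈ Ioo a b} :=
    analyticOnNhd_complexMGF.mono fun _ hz ↦ interior_maximal hX isOpen_Ioo hz
  have hYan : AnalyticOnNhd ℂ (complexMGF Y μ') {z | z.re ∈ Ioo a b} :=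
    analyticOnNhd_complexMGF.mono fun _ hz ↦ interior_maximal hY isOpen_Ioo hz
  obtain ⟨c, hc⟩ : (Ioo a b).Nonempty := nonempty_Ioo.2 hab
  refine hXan.eqOn_of_preconnected_of_frequently_eq hYan
    ((convex_Ioo a b).linear_preimage reLm).isPreconnected (z₀ := (c : ℂ)) (by simpa using hc) ?_
  have hreal : ∃ᶠ x : ℝ in 𝓝[≠] c, complexMGF X μ x = complexMGF Y μ' x := by
    refine (eventually_nhdsWithin_of_eventually_nhds (Ioo_mem_nhds hc.1 hc.2)).frequently.mono ?_
    intro x hx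
    rw [complexMGF_ofReal, complexMGF_ofReal, h hx]
  exact (tendsto_nhdsWithin_iff.2 ⟨(continuous_ofReal.tendsto c).mono_left nhdsWithin_le_nhds,
    eventually_nhdsWithin_of_forall fun _ hx ↦ ofReal_injective.ne hx⟩).frequently hreal

end

lemma charFun_withDensity_exp_mul (μ : Measure ℝ) (c y : ℝ) :
    charFun (μ.withDensity fun t ↦ ENNReal.ofReal (Real.exp (c * t))) y
      = complexMGF id μ (c + y * I) := by
  rw [← complexMGF_id_mul_I, complexMGF, complexMGF,
    integral_withDensity_eq_integral_toReal_smul (by fun_prop)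
      (ae_of_all _ fun _ ↦ ENNReal.ofReal_lt_top)]
  congr with t
  rw [ENNReal.toReal_ofReal (Real.exp_pos _).le, real_smul, ofReal_exp, ← Complex.exp_add]
  simp only [id_eq, ofReal_mul]
  ring_nf

lemma _root_.MeasureTheory.Measure.ext_of_complexMGF_eq_on_vertical_line {μ₁ μ₂ : Measure ℝ}
    {c : ℝ} (h₁ : c ∈ integrableExpSet id μ₁) (h₂ : c ∈ integrableExpSet id μ₂)
    (h : ∀ y : ℝ, complexMGF id μ₁ (c + y * I) = complexMGF id μ₂ (c + y * I)) : μ₁ = μ₂ := by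
  set f : ℝ → ℝ≥0∞ := fun t ↦ ENNReal.ofReal (Real.exp (c * t))
  have : IsFiniteMeasure (μ₁.withDensity f) := isFiniteMeasure_withDensity_ofReal h₁.2
  have : IsFiniteMeasure (μ₂.withDensity f) := isFiniteMeasure_withDensity_ofReal h₂.2
  have htilt : μ₁.withDensity f = μ₂.withDensity f := Measure.ext_of_charFun <| funext fun y ↦ by
    rw [charFun_withDensity_exp_mul, charFun_withDensity_exp_mul, h]
  have hf : Measurable f := by fun_prop
  have hf0 : ∀ t, f t ≠ 0 := fun t ↦ ENNReal.ofReal_pos.2 (Real.exp_pos _) |>.ne'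
  have hftop : ∀ t, f t ≠ ∞ := fun t ↦ ENNReal.ofReal_ne_top
  rw [← withDensity_inv_same hf (ae_of_all μ₁ hf0) (ae_of_all μ₁ hftop),
    ← withDensity_inv_same hf (ae_of_all μ₂ hf0) (ae_of_all μ₂ hftop), htilt]

end ProbabilityTheory

open ProbabilityTheory

theorem laplace_transform_injective_general (μ₁ μ₂ : Measure ℝ)
    (a b : ℝ) (hab : a < b)
    (h : ∀ α ∈ Set.Ioo a b,
      (∫⁻ t, ENNReal.ofReal (Real.exp (-α * t)) ∂μ₁)
        = (∫⁻ t, ENNReal.ofReal (Real.exp (-α * t)) ∂μ₂) ∧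
      (∫⁻ t, ENNReal.ofReal (Real.exp (-α * t)) ∂μ₁) < ∞) :
    μ₁ = μ₂ := by
  have hneg : ∀ s ∈ Ioo (-b) (-a), -s ∈ Ioo a b := fun s hs ↦ ⟨lt_neg.1 hs.2, neg_lt.1 hs.1⟩
  have hlaplace : ∀ s ∈ Ioo (-b) (-a),
      (∫⁻ t, ENNReal.ofReal (Real.exp (s * t)) ∂μ₁) = ∫⁻ t, ENNReal.ofReal (Real.exp (s * t)) ∂μ₂ ∧
      (∫⁻ t, ENNReal.ofReal (Real.exp (s * t)) ∂μ₁) < ∞ := fun s hs ↦ by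
    simpa using h (-s) (hneg s hs)
  have hint₁ : Ioo (-b) (-a) ⊆ integrableExpSet id μ₁ := fun s hs ↦
    mem_integrableExpSet_of_lintegral_lt_top aemeasurable_id (hlaplace s hs).2
  have hint₂ : Ioo (-b) (-a) ⊆ integrableExpSet id μ₂ := fun s hs ↦
    mem_integrableExpSet_of_lintegral_lt_top aemeasurable_id ((hlaplace s hs).1 ▸ (hlaplace s hs).2)
  have hmgf : EqOn (mgf id μ₁) (mgf id μ₂) (Ioo (-b) (-a)) := fun s hs ↦ by
    rw [mgf_eq_toReal_lintegral aemeasurable_id, mgf_eq_toReal_lintegral aemeasurable_id]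
    exact congrArg ENNReal.toReal (hlaplace s hs).1
  obtain ⟨c, hc⟩ : (Ioo (-b) (-a)).Nonempty := nonempty_Ioo.2 (neg_lt_neg hab)
  refine Measure.ext_of_complexMGF_eq_on_vertical_line (hint₁ hc) (hint₂ hc) fun y ↦ ?_
  exact eqOn_complexMGF_of_eqOn_mgf (neg_lt_neg hab) hint₁ hint₂ hmgf (by simpa using hc)

/-- **Injectivity of the two-sided Laplace transform.**
If two finite Borel measures on `ℝ` have equal and finite Laplace transforms
`∫ e^{-α t} dμᵢ(t)` for all `α` in a nonempty open interval `(a,b)`, then they are equal. -/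
theorem laplace_transform_injective (μ₁ μ₂ : Measure ℝ)
    [IsFiniteMeasure μ₁] [IsFiniteMeasure μ₂] (a b : ℝ) (hab : a < b)
    (h : ∀ α ∈ Set.Ioo a b,
      (∫⁻ t, ENNReal.ofReal (Real.exp (-α * t)) ∂μ₁)
        = (∫⁻ t, ENNReal.ofReal (Real.exp (-α * t)) ∂μ₂) ∧
      (∫⁻ t, ENNReal.ofReal (Real.exp (-α * t)) ∂μ₁) < ∞) :
    μ₁ = μ₂ :=
  laplace_transform_injective_general μ₁ μ₂ a b hab h
end

section
/- Let p ≪ q be probability measures on a measurable space X, let f = -log(dp/dq), and let q̃ = f_*(q) be the push-forward of q under f. Then the measure p̃ defined by dp̃(t) = e^{-t} dq̃(t) equals the push-forward f_*(p), and in particular p̃ is a probability measure. -/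
open MeasureTheory
open scoped ENNReal

/-- Let `p ≪ q` be probability measures on `X`, `f = -log (dp/dq)` and `q̃ = f_* q`.
Then the measure `p̃` with `dp̃(t) = e^{-t} dq̃(t)` equals the push-forward `f_* p`,
and in particular `p̃` is a probability measure. -/
theorem tilde_p_eq_pushforward {X : Type*} [MeasurableSpace X]
    (p q : Measure X) [IsProbabilityMeasure p] [IsProbabilityMeasure q]
    (hac : p ≪ q) :
    ((q.map (fun x => -(ENNReal.log (p.rnDeriv q x)))).withDensity
        (fun t => EReal.exp (-t)))
      = p.map (fun x => -(ENNReal.log (p.rnDeriv q x)))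
    ∧ IsProbabilityMeasure
        ((q.map (fun x => -(ENNReal.log (p.rnDeriv q x)))).withDensity
          (fun t => EReal.exp (-t))) := by
  have hf : Measurable (fun x => -(ENNReal.log (p.rnDeriv q x))) :=
    ((p.measurable_rnDeriv q).ennreal_log).neg
  have hg : Measurable (fun t : EReal => EReal.exp (-t)) :=
    measurable_neg.ereal_exp
  have key : ((q.map (fun x => -(ENNReal.log (p.rnDeriv q x)))).withDensity
      (fun t => EReal.exp (-t)))
      = p.map (fun x => -(ENNReal.log (p.rnDeriv q x))) := by
    ext s hs
    rw [withDensity_apply _ hs, setLIntegral_map hs hg hf,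
      Measure.map_apply hf hs]
    simp only [neg_neg, ENNReal.exp_log]
    exact Measure.setLIntegral_rnDeriv hac _
  refine ⟨key, ?_⟩
  rw [key]
  exact Measure.isProbabilityMeasure_map hf.aemeasurable
end

section
/- Let p ≪ q be probability measures on X and let f = -log(dp/dq) with q̃ = f_*(q), p̃ = e^{-t}·q̃. Then the map R : L¹(ℝ̄, q̃) → L¹(X, q) defined by R(g) = g ∘ f is a positive, integral-preserving linear map (a stochastic map) satisfying R(dp̃/dq̃) = dp/dq q-almost everywhere and R(1) = 1. -/
open MeasureTheory
open scoped ENNReal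

/-- Let `p ≪ q` be probability measures, `f = -log (dp/dq)`, `q̃ = f_* q` and
`p̃ = e^{-t}·q̃`, so that `dp̃/dq̃ (t) = e^{-t}`. The map `R(g) = g ∘ f` is a
positive (automatic, as functions are `ℝ≥0∞`-valued), additive, integral-preserving
map (a stochastic map) from `L¹(q̃)` to `L¹(q)` satisfying `R(dp̃/dq̃) = dp/dq`
`q`-almost everywhere and `R 1 = 1`. -/
theorem recovery_map_is_stochastic {X : Type*} [MeasurableSpace X]
    (p q : Measure X) [IsProbabilityMeasure p] [IsProbabilityMeasure q]
    (hac : p ≪ q)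
    (f : X → EReal) (hf : f = fun x => -(ENNReal.log (p.rnDeriv q x)))
    (R : (EReal → ℝ≥0∞) → (X → ℝ≥0∞)) (hR : R = fun g => g ∘ f) :
    (∀ g₁ g₂ : EReal → ℝ≥0∞, R (g₁ + g₂) = R g₁ + R g₂)
    ∧ (∀ g : EReal → ℝ≥0∞, Measurable g →
        (∫⁻ x, R g x ∂q) = ∫⁻ t, g t ∂(q.map f))
    ∧ R (fun t => EReal.exp (-t)) =ᵐ[q] p.rnDeriv q
    ∧ R (fun _ => 1) = fun _ => 1 := by
  have hfm : Measurable f := by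
    rw [hf]
    exact (ENNReal.measurable_log.comp (p.measurable_rnDeriv q)).neg
  refine ⟨fun g₁ g₂ => by rw [hR]; rfl, fun g hg => ?_, ?_, by rw [hR]; rfl⟩
  · rw [lintegral_map hg hfm, hR]; rfl
  · refine Filter.Eventually.of_forall fun x => ?_
    simp [hR, hf, ENNReal.exp_log]
end

section
/- Let p and q be probability vectors in ℝⁿ with p ≪ q (support of p contained in support of q). Suppose the ratios r_i = p_i/q_i take m distinct values, with I_j the index sets where r equals the j-th distinct value. Define p̃_j = Σ_{k∈I_j} p_k and q̃_j = Σ_{k∈I_j} q_k. Then D_α(p,q) = D_α(p̃,q̃) for all α ∈ ℝ. -/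
open Finset

/-- Coarse-graining a probability-vector dichotomy `(p,q)` (with `q > 0` entrywise, so
`p ≪ q`) along the level sets of the likelihood ratio `rᵢ = pᵢ/qᵢ` leaves all
Rényi divergences `D_α(p,q) = (α-1)⁻¹ log ∑ pᵢ^α qᵢ^{1-α}` unchanged.
Here `c : Fin n → Fin m` is the (surjective) assignment of indices to the `m` distinct
ratio values, and `p̃ⱼ = ∑_{c i = j} pᵢ`, `q̃ⱼ = ∑_{c i = j} qᵢ`. -/
theorem renyi_coarse_graining {n m : ℕ} (p q : Fin n → ℝ)
    (hp : ∀ i, 0 ≤ p i) (hq : ∀ i, 0 < q i)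
    (hpsum : ∑ i, p i = 1) (hqsum : ∑ i, q i = 1)
    (c : Fin n → Fin m) (hsurj : Function.Surjective c)
    (hlevel : ∀ i j, c i = c j ↔ p i / q i = p j / q j)
    (ptilde qtilde : Fin m → ℝ)
    (hpt : ∀ j, ptilde j = ∑ i ∈ Finset.univ.filter (fun i => c i = j), p i)
    (hqt : ∀ j, qtilde j = ∑ i ∈ Finset.univ.filter (fun i => c i = j), q i)
    (α : ℝ) :
    (α - 1)⁻¹ * Real.log (∑ i, p i ^ α * q i ^ (1 - α))
      = (α - 1)⁻¹ * Real.log (∑ j, ptilde j ^ α * qtilde j ^ (1 - α)) := by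
  congr 1
  congr 1
  -- pick a representative for each fiber
  choose rep hrep using hsurj
  set r : Fin m → ℝ := fun j => p (rep j) / q (rep j) with hr
  have hr0 : ∀ j, 0 ≤ r j := fun j => div_nonneg (hp _) (le_of_lt (hq _))
  have hratio : ∀ i, p i / q i = r (c i) := by
    intro i
    have := (hlevel i (rep (c i))).mp (by rw [hrep])
    simpa [hr] using this
  have hpq : ∀ i, p i = r (c i) * q i := by
    intro i
    rw [← hratio i, div_mul_cancel₀ _ (hq i).ne']
  have hqt' : ∀ j, qtilde j = ∑ i ∈ Finset.univ.filter (fun i => c i = j), q i := hqt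
  have hqtpos : ∀ j, 0 < qtilde j := by
    intro j
    rw [hqt]
    apply Finset.sum_pos (fun i _ => hq i)
    exact ⟨rep j, by simp [hrep]⟩
  have hpt' : ∀ j, ptilde j = r j * qtilde j := by
    intro j
    rw [hpt, hqt, Finset.mul_sum]
    apply Finset.sum_congr rfl
    intro i hi
    rw [hpq i]
    simp only [Finset.mem_filter] at hi
    rw [hi.2]
  have key : ∀ j, ptilde j ^ α * qtilde j ^ (1 - α) = r j ^ α * qtilde j := by
    intro j
    rw [hpt' j, Real.mul_rpow (hr0 j) (hqtpos j).le, mul_assoc,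
      ← Real.rpow_add (hqtpos j)]
    norm_num
  have key2 : ∀ i, p i ^ α * q i ^ (1 - α) = r (c i) ^ α * q i := by
    intro i
    rw [hpq i, Real.mul_rpow (hr0 _) (hq i).le, mul_assoc,
      ← Real.rpow_add (hq i)]
    norm_num
  rw [← Finset.sum_fiberwise (f := fun i => p i ^ α * q i ^ (1 - α)) (g := c)]
  apply Finset.sum_congr rfl
  intro j _
  rw [key j, hqt j, Finset.mul_sum]
  apply Finset.sum_congr rfl
  intro i hi
  simp only [Finset.mem_filter] at hi
  rw [key2 i, hi.2]
end

section
/- Let p₁, q₁ ∈ ℝ^{n₁} and p₂, q₂ ∈ ℝ^{n₂} be probability vectors with p_i ≪ q_i. Then there exist stochastic matrices T ∈ ℝ^{n₂×n₁} and R ∈ ℝ^{n₁×n₂} with T p₁ = p₂, T q₁ = q₂, R p₂ = p₁, R q₂ = q₁ if and only if D_α(p₁,q₁) = D_α(p₂,q₂) for all α in some nonempty open interval of ℝ. -/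
/-!
For `0 < α < 1` the sum `∑ pᵢ^α qᵢ^{1-α}` can only grow under a stochastic matrix (Hölder's
inequality in each row), so two dichotomies that convert into each other have the same Rényi
divergences on `(0, 1)`.

Conversely, for `α ≠ 0` that sum equals `∑ₛ w(s) e^{sα}`, where `w(s)` is the `q`-mass of the set on
which the log-likelihood ratio `log (p / q)` equals `s`. Exponentials with distinct exponents are
linearly independent on any interval (a Vandermonde determinant), so equal divergences force equal
weights `w`: the two dichotomies have the same image under their log-likelihood ratios. That
statistic is sufficient, so each dichotomy is recovered from the common image by its Bayesian
inverse; composing the statistic of one with the Bayesian inverse of the other gives the stochastic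
matrices.
-/

open Finset

section

open Real Function

variable {ι : Type*} [Fintype ι]

theorem rpow_mul_rpow_one_sub_self {x : ℝ} (hx : 0 ≤ x) {α : ℝ} (hα : α ≠ 0) :
    x ^ α * x ^ (1 - α) = x := by
  rcases hx.eq_or_lt with rfl | hx
  · rw [zero_rpow hα, zero_mul]
  · rw [← rpow_add hx, add_sub_cancel, rpow_one]

theorem mul_rpow_mul_rpow_one_sub {c x : ℝ} (hc : 0 ≤ c) (hx : 0 ≤ x) {α : ℝ} (hα : α ≠ 0) :
    (c * x) ^ α * x ^ (1 - α) = c ^ α * x := by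
  rw [mul_rpow hc hx, mul_assoc, rpow_mul_rpow_one_sub_self hx hα]

theorem sum_rpow_mul_rpow_one_sub_le {x y : ι → ℝ} (hx : ∀ i, 0 ≤ x i) (hy : ∀ i, 0 ≤ y i)
    {α : ℝ} (hα : α ∈ Set.Ioo 0 1) :
    ∑ i, x i ^ α * y i ^ (1 - α) ≤ (∑ i, x i) ^ α * (∑ i, y i) ^ (1 - α) := by
  obtain ⟨h0, h1⟩ := hα
  have hpq : α⁻¹.HolderConjugate (1 - α)⁻¹ :=
    holderConjugate_iff.2 ⟨(one_lt_inv₀ h0).2 h1, by rw [inv_inv, inv_inv]; ring⟩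
  have := inner_le_Lp_mul_Lq_of_nonneg univ hpq (fun i _ => rpow_nonneg (hx i) α)
    (fun i _ => rpow_nonneg (hy i) (1 - α))
  simpa only [rpow_rpow_inv (hx _) h0.ne', rpow_rpow_inv (hy _) (sub_ne_zero.2 h1.ne'), one_div,
    inv_inv] using this

theorem eqOn_of_eqOn_diff_finite {f g : ℝ → ℝ} (hf : Continuous f) (hg : Continuous g)
    {U E : Set ℝ} (hU : IsOpen U) (hE : E.Finite) (h : Set.EqOn f g (U \ E)) : Set.EqOn f g U :=
  h.of_subset_closure hf.continuousOn hg.continuousOn Set.sdiff_subset <| calc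
    U = U ∩ closure Eᶜ := by rw [(hE.countable.dense_compl ℝ).closure_eq, Set.inter_univ]
    _ ⊆ closure (U ∩ Eᶜ) := hU.inter_closure

theorem eq_of_eqOn_sum_mul_exp {s : ι → ℝ} (hs : Injective s) {c d : ι → ℝ} {a b : ℝ}
    (hab : a < b)
    (h : Set.EqOn (fun α => ∑ i, c i * exp (s i * α)) (fun α => ∑ i, d i * exp (s i * α))
      (Set.Ioo a b)) : c = d := by
  set n := Fintype.card ι
  set e := (Fintype.equivFin ι).symm
  set δ := (b - a) / (n + 1)
  have hδ : 0 < δ := div_pos (sub_pos.2 hab) (by positivity)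
  have hnode (m : Fin n) : a + (m + 1) * δ ∈ Set.Ioo a b := by
    have hm : (m + 1 : ℝ) ≤ n := by exact_mod_cast m.2
    have hb : a + (n + 1) * δ = b := by
      rw [mul_div_cancel₀ _ (by positivity : (n + 1 : ℝ) ≠ 0)]; ring
    constructor <;> nlinarith
  -- the values at the nodes `a + (m + 1) δ` form a Vandermonde system in the `exp (s i δ)`
  have hvdm (m : Fin n) : ∑ j, ((c - d) (e j) * exp (s (e j) * (a + δ))) *
      exp (s (e j) * δ) ^ (m : ℕ) = 0 := by
    have hm := sub_eq_zero.2 (h (hnode m))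
    rw [← sum_sub_distrib, ← e.sum_comp] at hm
    rw [← hm]
    refine sum_congr rfl fun j _ => ?_
    rw [← exp_nat_mul, mul_assoc, ← exp_add, Pi.sub_apply, sub_mul]
    ring_nf
  have hinj : Injective fun j => exp (s (e j) * δ) := fun i j hij =>
    e.injective (hs (mul_right_cancel₀ hδ.ne' (exp_injective hij)))
  ext i
  have hi := congrFun (Matrix.eq_zero_of_forall_pow_sum_mul_pow_eq_zero hinj hvdm) (e.symm i)
  simp only [Equiv.apply_symm_apply, Pi.sub_apply, Pi.zero_apply, mul_eq_zero, exp_ne_zero,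
    or_false] at hi
  exact sub_eq_zero.1 hi

/-- `D_α(p, q) = (α - 1)⁻¹ * log (renyiSum p q α)`. -/
noncomputable def renyiSum (p q : ι → ℝ) (α : ℝ) : ℝ := ∑ i, p i ^ α * q i ^ (1 - α)

theorem renyiSum_pos {p q : ι → ℝ} (hp : ∀ i, 0 ≤ p i) (hq : ∀ i, 0 ≤ q i)
    (hac : ∀ i, q i = 0 → p i = 0) (hps : 0 < ∑ i, p i) (α : ℝ) : 0 < renyiSum p q α := by
  obtain ⟨i, -, hi⟩ := exists_lt_of_sum_lt (by simpa using hps : ∑ _ : ι, (0 : ℝ) < ∑ i, p i)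
  have hqi : 0 < q i := (hq i).lt_of_ne fun h => hi.ne' (hac i h.symm)
  exact sum_pos' (fun j _ => mul_nonneg (rpow_nonneg (hp j) _) (rpow_nonneg (hq j) _))
    ⟨i, mem_univ i, by positivity⟩

end

namespace Matrix

open Real

variable {ι ι' κ : Type*}

def IsStochastic [Fintype κ] (T : Matrix κ ι ℝ) : Prop :=
  (∀ i j, 0 ≤ T i j) ∧ ∀ j, ∑ i, T i j = 1

theorem IsStochastic.mul [Fintype ι'] [Fintype κ] {A : Matrix ι' κ ℝ} {B : Matrix κ ι ℝ}
    (hA : A.IsStochastic) (hB : B.IsStochastic) : (A * B).IsStochastic := by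
  refine ⟨fun i j => sum_nonneg fun k _ => mul_nonneg (hA.1 i k) (hB.1 k j), fun j => ?_⟩
  simp only [mul_apply]
  rw [sum_comm]
  simp only [← sum_mul, hA.2, one_mul, hB.2]

theorem IsStochastic.sum_mulVec [Fintype ι] [Fintype κ] {T : Matrix κ ι ℝ}
    (hT : T.IsStochastic) (v : ι → ℝ) : ∑ k, (T *ᵥ v) k = ∑ i, v i := by
  simp only [mulVec, dotProduct]
  rw [sum_comm]
  simp only [← sum_mul, hT.2, one_mul]

theorem IsStochastic.renyiSum_le [Fintype ι] [Fintype κ] {T : Matrix κ ι ℝ}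
    (hT : T.IsStochastic) {p q : ι → ℝ} (hp : ∀ i, 0 ≤ p i) (hq : ∀ i, 0 ≤ q i) {α : ℝ}
    (hα : α ∈ Set.Ioo 0 1) : renyiSum p q α ≤ renyiSum (T *ᵥ p) (T *ᵥ q) α := by
  have hsplit (j : ι) : p j ^ α * q j ^ (1 - α)
      = ∑ i, (T i j * p j) ^ α * (T i j * q j) ^ (1 - α) := by
    calc p j ^ α * q j ^ (1 - α) = ∑ i, T i j * (p j ^ α * q j ^ (1 - α)) := by
          rw [← sum_mul, hT.2 j, one_mul]
      _ = _ := sum_congr rfl fun i _ => by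
          rw [mul_rpow (hT.1 i j) (hp j), mul_rpow (hT.1 i j) (hq j), mul_mul_mul_comm,
            rpow_mul_rpow_one_sub_self (hT.1 i j) hα.1.ne']
  calc renyiSum p q α = ∑ i, ∑ j, (T i j * p j) ^ α * (T i j * q j) ^ (1 - α) := by
        rw [renyiSum, sum_comm]; exact sum_congr rfl fun j _ => hsplit j
    _ ≤ renyiSum (T *ᵥ p) (T *ᵥ q) α :=
        sum_le_sum fun i _ => sum_rpow_mul_rpow_one_sub_le (fun j => mul_nonneg (hT.1 i j) (hp j))
          (fun j => mul_nonneg (hT.1 i j) (hq j)) hα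

variable [DecidableEq κ]

def pushforward (f : ι → κ) : Matrix κ ι ℝ := of fun k i => if f i = k then 1 else 0

theorem isStochastic_pushforward [Fintype κ] (f : ι → κ) : (pushforward f).IsStochastic :=
  ⟨fun k i => by simp only [pushforward, of_apply]; split_ifs <;> norm_num,
    fun i => by simp [pushforward]⟩

variable [Fintype ι]

theorem pushforward_mulVec_apply (f : ι → κ) (v : ι → ℝ) (k : κ) :
    (pushforward f *ᵥ v) k = ∑ i with f i = k, v i := by
  simp [pushforward, mulVec, dotProduct, sum_filter]

theorem sum_mul_pushforward_mulVec [Fintype κ] (f : ι → κ) (g : κ → ℝ) (v : ι → ℝ) :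
    ∑ k, g k * (pushforward f *ᵥ v) k = ∑ i, g (f i) * v i := by
  simp_rw [pushforward_mulVec_apply, mul_sum]
  rw [← sum_fiberwise univ f fun i => g (f i) * v i]
  exact sum_congr rfl fun k _ => sum_congr rfl fun i hi => by rw [(mem_filter.1 hi).2]

/-- The cross-multiplied form of `p i / q i = (f₊ p) (f i) / (f₊ q) (f i)`. -/
def IsSufficient (f : ι → κ) (p q : ι → ℝ) : Prop :=
  ∀ i, p i * (pushforward f *ᵥ q) (f i) = q i * (pushforward f *ᵥ p) (f i)

theorem isSufficient_self (f : ι → κ) (q : ι → ℝ) : IsSufficient f q q :=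
  fun _ => rfl

variable {f : ι → κ} {p q : ι → ℝ}

theorem pushforward_mulVec_of_eq_mul_comp {w : κ → ℝ} (h : ∀ i, p i = w (f i) * q i) (k : κ) :
    (pushforward f *ᵥ p) k = w k * (pushforward f *ᵥ q) k := by
  rw [pushforward_mulVec_apply, pushforward_mulVec_apply, mul_sum]
  exact sum_congr rfl fun i hi => by rw [h i, (mem_filter.1 hi).2]

theorem isSufficient_of_eq_mul_comp {w : κ → ℝ} (h : ∀ i, p i = w (f i) * q i) :
    IsSufficient f p q := fun i => by
  rw [pushforward_mulVec_of_eq_mul_comp h, h i]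
  ring

theorem renyiSum_eq_sum_rpow_mul_pushforward_mulVec [Fintype κ] {w : κ → ℝ}
    (hw : ∀ k, 0 ≤ w k) (hq : ∀ i, 0 ≤ q i) (h : ∀ i, p i = w (f i) * q i) {α : ℝ}
    (hα : α ≠ 0) : renyiSum p q α = ∑ k, w k ^ α * (pushforward f *ᵥ q) k := by
  rw [sum_mul_pushforward_mulVec, renyiSum]
  exact sum_congr rfl fun i _ => by rw [h i, mul_rpow_mul_rpow_one_sub (hw _) (hq i) hα]

/-- Column `k` is `q` conditioned on the fibre of `f` over `k`. On fibres of `q`-mass zero any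
probability vector would do; we take `q`. -/
noncomputable def bayesInverse (f : ι → κ) (q : ι → ℝ) : Matrix ι κ ℝ :=
  of fun i k => if (pushforward f *ᵥ q) k = 0 then q i
    else if f i = k then q i / (pushforward f *ᵥ q) k else 0

theorem isStochastic_bayesInverse [Fintype κ] (f : ι → κ) (hq : ∀ i, 0 ≤ q i)
    (hq1 : ∑ i, q i = 1) : (bayesInverse f q).IsStochastic := by
  refine ⟨fun i k => ?_, fun k => ?_⟩
  · have hk : 0 ≤ (pushforward f *ᵥ q) k := by
      rw [pushforward_mulVec_apply]; exact sum_nonneg fun j _ => hq j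
    simp only [bayesInverse, of_apply]
    split_ifs
    exacts [hq i, div_nonneg (hq i) hk, le_rfl]
  · by_cases hk : (pushforward f *ᵥ q) k = 0
    · simp only [bayesInverse, of_apply, if_pos hk, hq1]
    · simp only [bayesInverse, of_apply, if_neg hk]
      rw [← sum_filter, ← sum_div, ← pushforward_mulVec_apply, div_self hk]

theorem bayesInverse_apply_mul_pushforward_mulVec (hq : ∀ i, 0 ≤ q i)
    (hac : ∀ i, q i = 0 → p i = 0) (hf : IsSufficient f p q) (i : ι) (k : κ) :
    bayesInverse f q i k * (pushforward f *ᵥ p) k = if f i = k then p i else 0 := by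
  by_cases hk : (pushforward f *ᵥ q) k = 0
  · have hq0 (j : ι) (hj : f j = k) : q j = 0 := by
      rw [pushforward_mulVec_apply, sum_eq_zero_iff_of_nonneg fun j _ => hq j] at hk
      exact hk j (mem_filter.2 ⟨mem_univ j, hj⟩)
    have hp0 : (pushforward f *ᵥ p) k = 0 := by
      rw [pushforward_mulVec_apply]
      exact sum_eq_zero fun j hj => hac j (hq0 j (mem_filter.1 hj).2)
    rw [hp0, mul_zero]
    split_ifs with hi
    exacts [(hac i (hq0 i hi)).symm, rfl]
  · simp only [bayesInverse, of_apply, if_neg hk]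
    split_ifs with hi
    · subst hi
      rw [div_mul_eq_mul_div, ← hf i, mul_div_cancel_right₀ _ hk]
    · rw [zero_mul]

theorem bayesInverse_mulVec_pushforward_mulVec [Fintype κ] (hq : ∀ i, 0 ≤ q i)
    (hac : ∀ i, q i = 0 → p i = 0) (hf : IsSufficient f p q) :
    bayesInverse f q *ᵥ (pushforward f *ᵥ p) = p := by
  ext i
  change ∑ k, bayesInverse f q i k * (pushforward f *ᵥ p) k = p i
  simp only [bayesInverse_apply_mul_pushforward_mulVec hq hac hf, Fintype.sum_ite_eq]

theorem exists_isStochastic_of_pushforward_eq [Fintype ι'] [Fintype κ] {f' : ι' → κ}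
    {p' q' : ι' → ℝ} (hpush_p : pushforward f' *ᵥ p' = pushforward f *ᵥ p)
    (hpush_q : pushforward f' *ᵥ q' = pushforward f *ᵥ q) (hq : ∀ i, 0 ≤ q i)
    (hq1 : ∑ i, q i = 1) (hac : ∀ i, q i = 0 → p i = 0) (hf : IsSufficient f p q) :
    ∃ T : Matrix ι ι' ℝ, T.IsStochastic ∧ T *ᵥ p' = p ∧ T *ᵥ q' = q :=
  ⟨bayesInverse f q * pushforward f',
    (isStochastic_bayesInverse f hq hq1).mul (isStochastic_pushforward f'),
    by rw [← mulVec_mulVec, hpush_p, bayesInverse_mulVec_pushforward_mulVec hq hac hf],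
    by rw [← mulVec_mulVec, hpush_q,
      bayesInverse_mulVec_pushforward_mulVec hq (fun _ h => h) (isSufficient_self f q)]⟩

end Matrix

section

open Real Matrix

variable {ι ι' : Type*}

/-- `none` stands for `log 0 = -∞`. -/
noncomputable def llr (p q : ι → ℝ) (S : Finset ℝ) (hS : ∀ i, log (p i / q i) ∈ S) (i : ι) :
    Option S :=
  if 0 < p i then some ⟨log (p i / q i), hS i⟩ else none

noncomputable def expOption {S : Finset ℝ} (k : Option S) : ℝ := k.elim 0 (exp ·)

theorem expOption_nonneg {S : Finset ℝ} (k : Option S) : 0 ≤ expOption k := by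
  cases k
  exacts [le_rfl, (exp_pos _).le]

variable {p q : ι → ℝ} {S : Finset ℝ} {hS : ∀ i, log (p i / q i) ∈ S}

theorem eq_expOption_llr_mul (hp : ∀ i, 0 ≤ p i) (hq : ∀ i, 0 ≤ q i)
    (hac : ∀ i, q i = 0 → p i = 0) (i : ι) : p i = expOption (llr p q S hS i) * q i := by
  unfold llr
  split_ifs with hi
  · have hqi : 0 < q i := (hq i).lt_of_ne fun h => hi.ne' (hac i h.symm)
    rw [expOption, Option.elim_some, exp_log (div_pos hi hqi), div_mul_cancel₀ _ hqi.ne']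
  · rw [expOption, Option.elim_none, zero_mul]
    exact le_antisymm (not_lt.1 hi) (hp i)

variable [Fintype ι]

theorem isSufficient_llr (hp : ∀ i, 0 ≤ p i) (hq : ∀ i, 0 ≤ q i)
    (hac : ∀ i, q i = 0 → p i = 0) : IsSufficient (llr p q S hS) p q :=
  isSufficient_of_eq_mul_comp (eq_expOption_llr_mul hp hq hac)

theorem renyiSum_eq_sum_mul_exp (hp : ∀ i, 0 ≤ p i) (hq : ∀ i, 0 ≤ q i)
    (hac : ∀ i, q i = 0 → p i = 0) {α : ℝ} (hα : α ≠ 0) :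
    renyiSum p q α = ∑ s : S, (pushforward (llr p q S hS) *ᵥ q) (some s) * exp (s * α) := by
  rw [renyiSum_eq_sum_rpow_mul_pushforward_mulVec expOption_nonneg hq
    (eq_expOption_llr_mul (hS := hS) hp hq hac) hα, Fintype.sum_option]
  simp only [expOption, Option.elim_none, Option.elim_some, zero_rpow hα, zero_mul, zero_add,
    exp_mul]
  exact sum_congr rfl fun s _ => mul_comm _ _

theorem pushforward_llr_eq_of_renyiSum_eq [Fintype ι'] {p' q' : ι' → ℝ}
    {hS' : ∀ i, log (p' i / q' i) ∈ S} (hp' : ∀ i, 0 ≤ p' i) (hq' : ∀ i, 0 ≤ q' i)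
    (hq's : ∑ i, q' i = 1) (hac' : ∀ i, q' i = 0 → p' i = 0) (hp : ∀ i, 0 ≤ p i)
    (hq : ∀ i, 0 ≤ q i) (hqs : ∑ i, q i = 1) (hac : ∀ i, q i = 0 → p i = 0) {a b : ℝ}
    (hab : a < b) (h : Set.EqOn (renyiSum p' q') (renyiSum p q) (Set.Ioo a b \ {1})) :
    pushforward (llr p' q' S hS') *ᵥ p' = pushforward (llr p q S hS) *ᵥ p ∧
      pushforward (llr p' q' S hS') *ᵥ q' = pushforward (llr p q S hS) *ᵥ q := by
  set Q' := pushforward (llr p' q' S hS') *ᵥ q'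
  set Q := pushforward (llr p q S hS) *ᵥ q
  -- `renyiSum` is an exponential sum only off `α = 0`, where `0 ^ 0 = 1`; continuity fills the gap
  have hexp : Set.EqOn (fun α => ∑ s : S, Q' (some s) * exp (s * α))
      (fun α => ∑ s : S, Q (some s) * exp (s * α)) (Set.Ioo a b) := by
    refine eqOn_of_eqOn_diff_finite (by fun_prop) (by fun_prop) isOpen_Ioo
      (Set.toFinite {0, 1}) fun α hα => ?_
    have hα0 : α ≠ 0 := fun h0 => hα.2 (Or.inl h0)
    rw [← renyiSum_eq_sum_mul_exp hp' hq' hac' hα0, ← renyiSum_eq_sum_mul_exp hp hq hac hα0]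
    exact h ⟨hα.1, fun h1 => hα.2 (Or.inr h1)⟩
  have hsome : ∀ s : S, Q' (some s) = Q (some s) :=
    congrFun (eq_of_eqOn_sum_mul_exp Subtype.val_injective hab hexp)
  have hnone : Q' none = Q none := by
    have hmass' : ∑ k, Q' k = 1 := ((isStochastic_pushforward _).sum_mulVec q').trans hq's
    have hmass : ∑ k, Q k = 1 := ((isStochastic_pushforward _).sum_mulVec q).trans hqs
    rw [Fintype.sum_option] at hmass' hmass
    simp only [hsome] at hmass'
    linarith
  have hQ : Q' = Q := funext fun k => by cases k; exacts [hnone, hsome _]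
  refine ⟨funext fun k => ?_, hQ⟩
  rw [pushforward_mulVec_of_eq_mul_comp (eq_expOption_llr_mul hp' hq' hac'),
    pushforward_mulVec_of_eq_mul_comp (eq_expOption_llr_mul hp hq hac)]
  exact congrArg (expOption k * ·) (congrFun hQ k)

end

/-- Two probability-vector dichotomies `(p₁,q₁)` and `(p₂,q₂)` with `pᵢ ≪ qᵢ` are
interconvertible by stochastic matrices if and only if their classical Rényi
divergences `D_α(p,q) = (α-1)⁻¹ log ∑ pᵢ^α qᵢ^{1-α}` agree for all `α` in some
nonempty open interval of `ℝ`. -/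
theorem interconvertible_iff_renyi_eq {n₁ n₂ : ℕ}
    (p₁ q₁ : Fin n₁ → ℝ) (p₂ q₂ : Fin n₂ → ℝ)
    (hp₁ : ∀ i, 0 ≤ p₁ i) (hq₁ : ∀ i, 0 ≤ q₁ i)
    (hp₂ : ∀ i, 0 ≤ p₂ i) (hq₂ : ∀ i, 0 ≤ q₂ i)
    (hp₁s : ∑ i, p₁ i = 1) (hq₁s : ∑ i, q₁ i = 1)
    (hp₂s : ∑ i, p₂ i = 1) (hq₂s : ∑ i, q₂ i = 1)
    (hac₁ : ∀ i, q₁ i = 0 → p₁ i = 0) (hac₂ : ∀ i, q₂ i = 0 → p₂ i = 0) :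
    (∃ (T : Matrix (Fin n₂) (Fin n₁) ℝ) (R : Matrix (Fin n₁) (Fin n₂) ℝ),
      (∀ i j, 0 ≤ T i j) ∧ (∀ j, ∑ i, T i j = 1) ∧
      (∀ i j, 0 ≤ R i j) ∧ (∀ j, ∑ i, R i j = 1) ∧
      T.mulVec p₁ = p₂ ∧ T.mulVec q₁ = q₂ ∧
      R.mulVec p₂ = p₁ ∧ R.mulVec q₂ = q₁)
    ↔ (∃ a b : ℝ, a < b ∧ ∀ α ∈ Set.Ioo a b,
        (α - 1)⁻¹ * Real.log (∑ i, p₁ i ^ α * q₁ i ^ (1 - α))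
          = (α - 1)⁻¹ * Real.log (∑ i, p₂ i ^ α * q₂ i ^ (1 - α))) := by
  constructor
  · rintro ⟨T, R, hT, hTs, hR, hRs, hTp, hTq, hRp, hRq⟩
    refine ⟨0, 1, one_pos, fun α hα => ?_⟩
    have h₁ := Matrix.IsStochastic.renyiSum_le ⟨hT, hTs⟩ hp₁ hq₁ hα
    have h₂ := Matrix.IsStochastic.renyiSum_le ⟨hR, hRs⟩ hp₂ hq₂ hα
    rw [hTp, hTq] at h₁
    rw [hRp, hRq] at h₂
    exact congrArg (fun x => (α - 1)⁻¹ * Real.log x) (le_antisymm h₁ h₂)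
  · rintro ⟨a, b, hab, h⟩
    have hsum : Set.EqOn (renyiSum p₁ q₁) (renyiSum p₂ q₂) (Set.Ioo a b \ {1}) := fun α hα =>
      Real.log_injOn_pos (renyiSum_pos hp₁ hq₁ hac₁ (hp₁s ▸ one_pos) α)
        (renyiSum_pos hp₂ hq₂ hac₂ (hp₂s ▸ one_pos) α)
        (mul_left_cancel₀ (inv_ne_zero (sub_ne_zero.2 hα.2)) (h α hα.1))
    let S := univ.image (fun i => Real.log (p₁ i / q₁ i)) ∪
      univ.image (fun i => Real.log (p₂ i / q₂ i))
    have hS₁ (i : Fin n₁) : Real.log (p₁ i / q₁ i) ∈ S :=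
      mem_union_left _ (mem_image_of_mem _ (mem_univ i))
    have hS₂ (i : Fin n₂) : Real.log (p₂ i / q₂ i) ∈ S :=
      mem_union_right _ (mem_image_of_mem _ (mem_univ i))
    obtain ⟨hp, hq⟩ := pushforward_llr_eq_of_renyiSum_eq (hS' := hS₁) (hS := hS₂)
      hp₁ hq₁ hq₁s hac₁ hp₂ hq₂ hq₂s hac₂ hab hsum
    obtain ⟨T, hT, hTp, hTq⟩ := Matrix.exists_isStochastic_of_pushforward_eq hp hq hq₂ hq₂s hac₂
      (isSufficient_llr hp₂ hq₂ hac₂)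
    obtain ⟨R, hR, hRp, hRq⟩ := Matrix.exists_isStochastic_of_pushforward_eq hp.symm hq.symm hq₁
      hq₁s hac₁ (isSufficient_llr hp₁ hq₁ hac₁)
    exact ⟨T, R, hT.1, hT.2, hR.1, hR.2, hTp, hTq, hRp, hRq⟩
end

section
/- Let (p₁,q₁) and (p₂,q₂) be pairs of probability vectors with p_i ≪ q_i, and suppose Σ_{j} p_{1,j}^α q_{1,j}^{1-α} = Σ_j p_{2,j}^α q_{2,j}^{1-α} for all α in a nonempty open interval. Then the coarse-grained minimal forms coincide: the multisets of pairs (q̃_j, r̃_j) of level-set weights and distinct likelihood ratios agree for both dichotomies. -/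
open Finset


lemma vand_kernel {m : ℕ} (y : Fin m → ℝ) (hy : Function.Injective y) (w : Fin m → ℝ)
    (h : ∀ k : Fin m, ∑ j, w j * y j ^ (k : ℕ) = 0) : ∀ j, w j = 0 := by
  have hdet : (Matrix.vandermonde y).det ≠ 0 :=
    Matrix.det_vandermonde_ne_zero_iff.mpr hy
  have hunit : IsUnit ((Matrix.vandermonde y).transpose) := by
    rw [Matrix.isUnit_iff_isUnit_det, Matrix.det_transpose]
    exact hdet.isUnit
  have hinj := Matrix.mulVec_injective_iff_isUnit.mpr hunit
  have h0 : (Matrix.vandermonde y).transpose.mulVec w = 0 := by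
    funext k
    have hk := h k
    simp only [Matrix.mulVec, Matrix.transpose_apply, Matrix.vandermonde, dotProduct,
      Matrix.of_apply, Pi.zero_apply]
    rw [← hk]
    exact Finset.sum_congr rfl fun j _ => mul_comm _ _
  have hw : w = 0 := hinj (by rw [h0, Matrix.mulVec_zero])
  intro j; rw [hw]; rfl

lemma exp_indep (T : Finset ℝ) (hT : ∀ v ∈ T, 0 < v) (e : ℝ → ℝ) {c d : ℝ} (hcd : c < d)
    (h : ∀ α ∈ Set.Ioo c d, ∑ v ∈ T, e v * v ^ α = 0) : ∀ v ∈ T, e v = 0 := by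
  set m := T.card with hm
  set t : Fin m → ℝ := fun j => ((T.orderIsoOfFin rfl j : ℝ)) with ht
  have htmem : ∀ j, t j ∈ T := fun j => (T.orderIsoOfFin rfl j).2
  have htinj : Function.Injective t := fun i j hij =>
    (T.orderIsoOfFin rfl).injective (Subtype.ext hij)
  have htsum : ∀ f : ℝ → ℝ, ∑ v ∈ T, f v = ∑ j, f (t j) := by
    intro f
    rw [← Finset.sum_coe_sort T f]
    exact (Fintype.sum_equiv (T.orderIsoOfFin rfl).toEquiv (fun j => f (t j))
      (fun x => f x) (fun j => rfl)).symm
  have hdc : (0:ℝ) < d - c := sub_pos.mpr hcd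
  set δ : ℝ := (d - c) / (4 * (m + 1)) with hδ
  have hδpos : 0 < δ := by positivity
  set α₀ : ℝ := (c + d) / 2 with hα₀
  have hmem : ∀ k : Fin m, α₀ + δ * k ∈ Set.Ioo c d := by
    intro k
    have hk0 : (0:ℝ) ≤ (k:ℝ) := Nat.cast_nonneg _
    have hkm : (k:ℝ) < (m:ℝ) + 1 := by
      have := k.isLt
      exact_mod_cast Nat.lt_succ_of_lt this
    have hδm : δ * ((m:ℝ) + 1) = (d - c) / 4 := by
      rw [hδ]; field_simp
    have h1 : δ * (k:ℝ) < (d - c) / 4 := by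
      calc δ * (k:ℝ) < δ * ((m:ℝ)+1) := by
            exact mul_lt_mul_of_pos_left hkm hδpos
        _ = (d - c)/4 := hδm
    constructor
    · have : 0 ≤ δ * (k:ℝ) := by positivity
      simp only [hα₀]; linarith
    · simp only [hα₀]; linarith
  have key : ∀ k : Fin m, ∑ j, (e (t j) * t j ^ α₀) * (t j ^ δ) ^ (k:ℕ) = 0 := by
    intro k
    have h1 := h _ (hmem k)
    rw [htsum (fun v => e v * v ^ (α₀ + δ * k))] at h1
    rw [← h1]
    refine Finset.sum_congr rfl fun j _ => ?_
    have hpos := hT _ (htmem j)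
    rw [Real.rpow_add hpos, Real.rpow_mul hpos.le, Real.rpow_natCast]
    ring
  have hyinj : Function.Injective (fun j => t j ^ δ) := by
    intro i j hij
    apply htinj
    have hi := hT _ (htmem i); have hj := hT _ (htmem j)
    rcases lt_trichotomy (t i) (t j) with h'|h'|h'
    · exact absurd hij (ne_of_lt (Real.rpow_lt_rpow hi.le h' hδpos))
    · exact h'
    · exact absurd hij.symm (ne_of_lt (Real.rpow_lt_rpow hj.le h' hδpos))
  have hz := vand_kernel (fun j => t j ^ δ) hyinj (fun j => e (t j) * t j ^ α₀) key
  intro v hv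
  obtain ⟨j, hj⟩ : ∃ j, t j = v :=
    ⟨(T.orderIsoOfFin rfl).symm ⟨v, hv⟩, by
      simp only [ht]
      rw [OrderIso.apply_symm_apply]⟩
  have hj0 := hz j
  have hpos : (0:ℝ) < t j ^ α₀ := Real.rpow_pos_of_pos (hT _ (htmem j)) _
  have : e (t j) = 0 := by
    rcases mul_eq_zero.mp hj0 with h' | h'
    · exact h'
    · exact absurd h' hpos.ne'
  rwa [hj] at this


open Classical in
/-- If two probability-vector dichotomies `(p₁,q₁)`, `(p₂,q₂)` (with strictly positive
`qᵢ`, so `pᵢ ≪ qᵢ`) satisfy `∑ⱼ p₁ⱼ^α q₁ⱼ^{1-α} = ∑ⱼ p₂ⱼ^α q₂ⱼ^{1-α}` for all `α` in a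
nonempty open interval, then their coarse-grained minimal forms coincide: the multisets
of pairs `(q̃ⱼ, r̃ⱼ)` of level-set weights and distinct likelihood ratios agree. -/
theorem minimal_forms_eq_of_renyi_eq {n₁ n₂ : ℕ}
    (p₁ q₁ : Fin n₁ → ℝ) (p₂ q₂ : Fin n₂ → ℝ)
    (hp₁ : ∀ i, 0 ≤ p₁ i) (hq₁ : ∀ i, 0 < q₁ i)
    (hp₂ : ∀ i, 0 ≤ p₂ i) (hq₂ : ∀ i, 0 < q₂ i)
    (hp₁s : ∑ i, p₁ i = 1) (hq₁s : ∑ i, q₁ i = 1)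
    (hp₂s : ∑ i, p₂ i = 1) (hq₂s : ∑ i, q₂ i = 1)
    (a b : ℝ) (hab : a < b)
    (h : ∀ α ∈ Set.Ioo a b,
      ∑ i, p₁ i ^ α * q₁ i ^ (1 - α) = ∑ i, p₂ i ^ α * q₂ i ^ (1 - α)) :
    ((Finset.univ.image (fun i => p₁ i / q₁ i)).val.map
        (fun v => ((∑ i ∈ Finset.univ.filter (fun i => p₁ i / q₁ i = v), q₁ i), v)))
      = ((Finset.univ.image (fun i => p₂ i / q₂ i)).val.map
        (fun v => ((∑ i ∈ Finset.univ.filter (fun i => p₂ i / q₂ i = v), q₂ i), v))) := by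
  classical
  set r₁ : Fin n₁ → ℝ := fun i => p₁ i / q₁ i with hr₁
  set r₂ : Fin n₂ → ℝ := fun i => p₂ i / q₂ i with hr₂
  set S₁ := Finset.univ.image r₁ with hS₁def
  set S₂ := Finset.univ.image r₂ with hS₂def
  set w₁ : ℝ → ℝ := fun v => ∑ i ∈ Finset.univ.filter (fun i => r₁ i = v), q₁ i with hw₁
  set w₂ : ℝ → ℝ := fun v => ∑ i ∈ Finset.univ.filter (fun i => r₂ i = v), q₂ i with hw₂
  have hr₁nn : ∀ i, 0 ≤ r₁ i := fun i => div_nonneg (hp₁ i) (hq₁ i).le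
  have hr₂nn : ∀ i, 0 ≤ r₂ i := fun i => div_nonneg (hp₂ i) (hq₂ i).le
  -- term rewriting
  have term : ∀ (p q : ℝ), 0 ≤ p → 0 < q → ∀ α : ℝ, p ^ α * q ^ (1-α) = q * (p / q) ^ α := by
    intro p q hp hq α
    rw [Real.div_rpow hp hq.le, Real.rpow_sub hq, Real.rpow_one]
    have hqa : q ^ α ≠ 0 := (Real.rpow_pos_of_pos hq α).ne'
    field_simp
  have conv₁ : ∀ α : ℝ, ∑ i, p₁ i ^ α * q₁ i ^ (1 - α) = ∑ v ∈ S₁, w₁ v * v ^ α := by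
    intro α
    have hfib := Finset.sum_fiberwise_of_maps_to (s := Finset.univ) (g := r₁)
      (fun i _ => Finset.mem_image_of_mem r₁ (Finset.mem_univ i))
      (fun i => p₁ i ^ α * q₁ i ^ (1-α))
    rw [← hfib]
    refine Finset.sum_congr rfl fun v _ => ?_
    rw [hw₁]
    rw [Finset.sum_mul]
    refine Finset.sum_congr rfl fun i hi => ?_
    have hiv : r₁ i = v := (Finset.mem_filter.mp hi).2
    rw [← hiv]
    exact term _ _ (hp₁ i) (hq₁ i) α
  have conv₂ : ∀ α : ℝ, ∑ i, p₂ i ^ α * q₂ i ^ (1 - α) = ∑ v ∈ S₂, w₂ v * v ^ α := by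
    intro α
    have hfib := Finset.sum_fiberwise_of_maps_to (s := Finset.univ) (g := r₂)
      (fun i _ => Finset.mem_image_of_mem r₂ (Finset.mem_univ i))
      (fun i => p₂ i ^ α * q₂ i ^ (1-α))
    rw [← hfib]
    refine Finset.sum_congr rfl fun v _ => ?_
    rw [hw₂]
    rw [Finset.sum_mul]
    refine Finset.sum_congr rfl fun i hi => ?_
    have hiv : r₂ i = v := (Finset.mem_filter.mp hi).2
    rw [← hiv]
    exact term _ _ (hp₂ i) (hq₂ i) α
  -- out lemmas
  have hout₁ : ∀ v, v ∉ S₁ → w₁ v = 0 := by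
    intro v hv
    refine Finset.sum_eq_zero fun i hi => ?_
    exact absurd ((Finset.mem_filter.mp hi).2 ▸ Finset.mem_image_of_mem r₁ (Finset.mem_univ i)) hv
  have hout₂ : ∀ v, v ∉ S₂ → w₂ v = 0 := by
    intro v hv
    refine Finset.sum_eq_zero fun i hi => ?_
    exact absurd ((Finset.mem_filter.mp hi).2 ▸ Finset.mem_image_of_mem r₂ (Finset.mem_univ i)) hv
  -- positivity lemmas
  have hwpos₁ : ∀ v ∈ S₁, 0 < w₁ v := by
    intro v hv
    obtain ⟨i, _, rfl⟩ := Finset.mem_image.mp hv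
    refine Finset.sum_pos (fun i _ => hq₁ i) ⟨i, Finset.mem_filter.mpr ⟨Finset.mem_univ i, rfl⟩⟩
  have hwpos₂ : ∀ v ∈ S₂, 0 < w₂ v := by
    intro v hv
    obtain ⟨i, _, rfl⟩ := Finset.mem_image.mp hv
    refine Finset.sum_pos (fun i _ => hq₂ i) ⟨i, Finset.mem_filter.mpr ⟨Finset.mem_univ i, rfl⟩⟩
  have hmem₁ : ∀ v, 0 < w₁ v → v ∈ S₁ := by
    intro v hv
    by_contra hvn
    rw [hout₁ v hvn] at hv
    exact lt_irrefl 0 hv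
  have hmem₂ : ∀ v, 0 < w₂ v → v ∈ S₂ := by
    intro v hv
    by_contra hvn
    rw [hout₂ v hvn] at hv
    exact lt_irrefl 0 hv
  -- nonneg of union members
  have hUnn : ∀ v ∈ S₁ ∪ S₂, 0 ≤ v := by
    intro v hv
    rcases Finset.mem_union.mp hv with hv | hv
    · obtain ⟨i, _, rfl⟩ := Finset.mem_image.mp hv; exact hr₁nn i
    · obtain ⟨i, _, rfl⟩ := Finset.mem_image.mp hv; exact hr₂nn i
  -- choose interval avoiding 0
  obtain ⟨c, d, hcd, hsub, hne0⟩ : ∃ c d : ℝ, c < d ∧ Set.Ioo c d ⊆ Set.Ioo a b ∧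
      ∀ α ∈ Set.Ioo c d, α ≠ 0 := by
    rcases lt_or_ge a 0 with ha | ha
    · exact ⟨a, min b 0, lt_min hab ha,
        fun x hx => ⟨hx.1, lt_of_lt_of_le hx.2 (min_le_left _ _)⟩,
        fun α hα => (lt_of_lt_of_le hα.2 (min_le_right _ _)).ne⟩
    · exact ⟨a, b, hab, Set.Subset.refl _,
        fun α hα => (lt_of_le_of_lt ha hα.1).ne'⟩
  set T := (S₁ ∪ S₂).filter (fun v => 0 < v) with hTdef
  have hTpos : ∀ v ∈ T, 0 < v := fun v hv => (Finset.mem_filter.mp hv).2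
  -- the key equation on T
  have hTeq : ∀ α ∈ Set.Ioo c d, ∑ v ∈ T, (w₁ v - w₂ v) * v ^ α = 0 := by
    intro α hα
    have hα0 : α ≠ 0 := hne0 α hα
    have hz : ∀ v ∈ S₁ ∪ S₂, ∀ w : ℝ, ¬ (0 < v) → w * v ^ α = 0 := by
      intro v hv w hvn
      have hv0 : v = 0 := le_antisymm (not_lt.mp hvn) (hUnn v hv)
      rw [hv0, Real.zero_rpow hα0, mul_zero]
    have e₁ : ∑ v ∈ T, w₁ v * v ^ α = ∑ i, p₁ i ^ α * q₁ i ^ (1-α) := by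
      rw [conv₁ α, hTdef]
      rw [Finset.sum_filter_of_ne (fun v hv hn => by
        by_contra hc
        exact hn (hz v hv _ hc))]
      exact (Finset.sum_subset Finset.subset_union_left
        (fun v _ hvn => by rw [hout₁ v hvn, zero_mul])).symm
    have e₂ : ∑ v ∈ T, w₂ v * v ^ α = ∑ i, p₂ i ^ α * q₂ i ^ (1-α) := by
      rw [conv₂ α, hTdef]
      rw [Finset.sum_filter_of_ne (fun v hv hn => by
        by_contra hc
        exact hn (hz v hv _ hc))]
      exact (Finset.sum_subset Finset.subset_union_right
        (fun v _ hvn => by rw [hout₂ v hvn, zero_mul])).symm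
    have := h α (hsub hα)
    simp only [sub_mul, Finset.sum_sub_distrib, e₁, e₂, this, sub_self]
  have hwT : ∀ v ∈ T, w₁ v = w₂ v := fun v hv =>
    sub_eq_zero.mp (exp_indep T hTpos (fun v => w₁ v - w₂ v) hcd hTeq v hv)
  -- total mass identities
  have hsum₁ : ∑ v ∈ S₁ ∪ S₂, w₁ v = 1 := by
    rw [← Finset.sum_subset Finset.subset_union_left (fun v _ hvn => hout₁ v hvn)]
    have hfib := Finset.sum_fiberwise_of_maps_to (s := Finset.univ) (g := r₁)
      (fun i _ => Finset.mem_image_of_mem r₁ (Finset.mem_univ i)) q₁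
    rw [hfib] at *
    · exact hq₁s
  have hsum₂ : ∑ v ∈ S₁ ∪ S₂, w₂ v = 1 := by
    rw [← Finset.sum_subset Finset.subset_union_right (fun v _ hvn => hout₂ v hvn)]
    have hfib := Finset.sum_fiberwise_of_maps_to (s := Finset.univ) (g := r₂)
      (fun i _ => Finset.mem_image_of_mem r₂ (Finset.mem_univ i)) q₂
    rw [hfib] at *
    · exact hq₂s
  -- zero weight equality
  have hw0 : w₁ 0 = w₂ 0 := by
    have hsplit₁ := Finset.sum_filter_add_sum_filter_not (S₁ ∪ S₂) (fun v => 0 < v) w₁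
    have hsplit₂ := Finset.sum_filter_add_sum_filter_not (S₁ ∪ S₂) (fun v => 0 < v) w₂
    have hTw : ∑ v ∈ T, w₁ v = ∑ v ∈ T, w₂ v := Finset.sum_congr rfl hwT
    have hneg : ∑ v ∈ (S₁ ∪ S₂).filter (fun v => ¬ 0 < v), w₁ v
        = ∑ v ∈ (S₁ ∪ S₂).filter (fun v => ¬ 0 < v), w₂ v := by
      rw [hTdef] at hTw
      linarith [hsplit₁, hsplit₂, hsum₁, hsum₂, hTw]
    have hsub0 : (S₁ ∪ S₂).filter (fun v => ¬ 0 < v) ⊆ {0} := by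
      intro v hv
      have := Finset.mem_filter.mp hv
      have hv0 : v = 0 := le_antisymm (not_lt.mp this.2) (hUnn v this.1)
      simp [hv0]
    rcases Finset.subset_singleton_iff.mp hsub0 with hcase | hcase
    · have h01 : (0:ℝ) ∉ S₁ := by
        intro h0
        have : (0:ℝ) ∈ (S₁ ∪ S₂).filter (fun v => ¬ 0 < v) :=
          Finset.mem_filter.mpr ⟨Finset.mem_union_left _ h0, lt_irrefl 0⟩
        rw [hcase] at this
        exact Finset.notMem_empty _ this
      have h02 : (0:ℝ) ∉ S₂ := by
        intro h0
        have : (0:ℝ) ∈ (S₁ ∪ S₂).filter (fun v => ¬ 0 < v) :=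
          Finset.mem_filter.mpr ⟨Finset.mem_union_right _ h0, lt_irrefl 0⟩
        rw [hcase] at this
        exact Finset.notMem_empty _ this
      rw [hout₁ 0 h01, hout₂ 0 h02]
    · rw [hcase] at hneg
      simpa using hneg
  -- S₁ = S₂
  have hSS : S₁ = S₂ := by
    ext v
    constructor
    · intro hv
      rcases (hUnn v (Finset.mem_union_left _ hv)).lt_or_eq with hv0 | hv0
      · have hvT : v ∈ T := Finset.mem_filter.mpr ⟨Finset.mem_union_left _ hv, hv0⟩
        exact hmem₂ v (hwT v hvT ▸ hwpos₁ v hv)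
      · obtain rfl := hv0.symm
        exact hmem₂ 0 (hw0 ▸ hwpos₁ 0 hv)
    · intro hv
      rcases (hUnn v (Finset.mem_union_right _ hv)).lt_or_eq with hv0 | hv0
      · have hvT : v ∈ T := Finset.mem_filter.mpr ⟨Finset.mem_union_right _ hv, hv0⟩
        exact hmem₁ v ((hwT v hvT).symm ▸ hwpos₂ v hv)
      · obtain rfl := hv0.symm
        exact hmem₁ 0 (hw0.symm ▸ hwpos₂ 0 hv)
  have hww : ∀ v ∈ S₂, w₁ v = w₂ v := by
    intro v hv
    rcases (hUnn v (Finset.mem_union_right _ hv)).lt_or_eq with hv0 | hv0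
    · exact hwT v (Finset.mem_filter.mpr ⟨Finset.mem_union_right _ hv, hv0⟩)
    · obtain rfl := hv0.symm
      exact hw0
  show S₁.val.map (fun v => (w₁ v, v)) = S₂.val.map (fun v => (w₂ v, v))
  rw [hSS]
  exact Multiset.map_congr rfl (fun v hv => by rw [hww v hv])
end

section
/- Let f : (0,∞) → ℝ be completely monotone and let n, m ∈ ℕᴸ be nonincreasing integer vectors with n majorizing m (Σ_{j≤k} n_j ≥ Σ_{j≤k} m_j for all k, with equality at k = L). Then ∏_{j=1}^L (-1)^{n_j} f^{(n_j)}(x) ≥ ∏_{j=1}^L (-1)^{m_j} f^{(m_j)}(x) for all x > 0; i.e., n ↦ ∏_j (-1)^{n_j} f^{(n_j)}(x) is Schur-convex. -/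
set_option linter.unusedSectionVars false
set_option maxHeartbeats 1000000

open Finset Set intervalIntegral

noncomputable def gg (f : ℝ → ℝ) (k : ℕ) (x : ℝ) : ℝ := (-1 : ℝ) ^ k * iteratedDeriv k f x

variable {f : ℝ → ℝ}

theorem L1 (hsmooth : ContDiffOn ℝ (⊤ : ℕ∞) f (Set.Ioi 0)) (k : ℕ) :
    ContDiffOn ℝ (⊤ : ℕ∞) (iteratedDeriv k f) (Set.Ioi 0) := by
  induction k with
  | zero => simpa [iteratedDeriv_zero] using hsmooth
  | succ k ih =>
    rw [iteratedDeriv_succ]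
    exact ih.deriv_of_isOpen isOpen_Ioi le_rfl

theorem L2 (hsmooth : ContDiffOn ℝ (⊤ : ℕ∞) f (Set.Ioi 0)) (k : ℕ) {x : ℝ} (hx : 0 < x) :
    HasDerivAt (gg f k) (-(gg f (k+1) x)) x := by
  have h1 : DifferentiableAt ℝ (iteratedDeriv k f) x := by
    have := (L1 hsmooth k).differentiableOn (by norm_num)
    exact (this x hx).differentiableAt (Ioi_mem_nhds hx)
  have h2 : HasDerivAt (iteratedDeriv k f) (iteratedDeriv (k+1) f x) x := by
    rw [iteratedDeriv_succ]
    exact h1.hasDerivAt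
  have := h2.const_mul ((-1 : ℝ) ^ k)
  refine this.congr_deriv ?_
  unfold gg
  ring

theorem L3 (hsmooth : ContDiffOn ℝ (⊤ : ℕ∞) f (Set.Ioi 0)) (k : ℕ) :
    ContinuousOn (gg f k) (Set.Ioi 0) :=
  ContinuousOn.const_smul ((L1 hsmooth k).continuousOn) ((-1:ℝ)^k)

theorem Lsub {x b : ℝ} (hx : 0 < x) (hb : x ≤ b) : Set.uIcc x b ⊆ Set.Ioi 0 := by
  rw [Set.uIcc_of_le hb]
  intro t ht
  exact lt_of_lt_of_le hx ht.1

theorem Lint (hsmooth : ContDiffOn ℝ (⊤ : ℕ∞) f (Set.Ioi 0)) (k p : ℕ) {x b : ℝ}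
    (hx : 0 < x) (hb : x ≤ b) :
    IntervalIntegrable (fun t => (t - x)^p / p.factorial * gg f k t) MeasureTheory.volume x b := by
  apply ContinuousOn.intervalIntegrable
  apply ContinuousOn.mul
  · fun_prop
  · exact (L3 hsmooth k).mono (Lsub hx hb)

/-- Taylor identity with integral remainder. -/
theorem L6 (hsmooth : ContDiffOn ℝ (⊤ : ℕ∞) f (Set.Ioi 0)) (j N : ℕ) (hN : 1 ≤ N) {x b : ℝ}
    (hx : 0 < x) (hb : x ≤ b) :
    gg f j x = (∑ i ∈ range N, gg f (j+i) b * (b-x)^i / i.factorial)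
      + ∫ t in x..b, (t-x)^(N-1) / (N-1).factorial * gg f (j+N) t := by
  induction N with
  | zero => omega
  | succ N ih =>
    rcases Nat.eq_or_lt_of_le hN with h1 | h1
    · -- N + 1 = 1, i.e. N = 0 : base case, FTC
      have hN0 : N = 0 := by omega
      subst hN0
      have ftc : (∫ t in x..b, -(gg f (j+1) t)) = gg f j b - gg f j x := by
        apply integral_eq_sub_of_hasDerivAt
        · intro t ht
          exact L2 hsmooth j (Lsub hx hb ht)
        · apply ContinuousOn.intervalIntegrable
          exact ((L3 hsmooth (j+1)).mono (Lsub hx hb)).neg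
      have : (∫ t in x..b, -(gg f (j+1) t)) = -∫ t in x..b, gg f (j+1) t :=
        integral_neg
      simp only [this] at ftc
      have : (∫ t in x..b, gg f (j+1) t) = gg f j x - gg f j b := by linarith
      simp [Nat.factorial]
      rw [show (∫ t in x..b, gg f (j + 1) t) = ∫ t in x..b, (t-x)^(0:ℕ) / (0:ℕ).factorial * gg f (j+1) t by
        apply integral_congr; intro t ht; simp]
        at this
      simp only [Nat.factorial] at this ⊢
      norm_num at this ⊢
      linarith
    · have hN1 : 1 ≤ N := by omega
      rw [ih hN1]
      rw [Finset.sum_range_succ]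
      -- goal: remainder_N = boundary term N + remainder_{N+1}
      have key : (∫ t in x..b, (t-x)^(N-1) / (N-1).factorial * gg f (j+N) t)
          = gg f (j+N) b * (b-x)^N / N.factorial
            + ∫ t in x..b, (t-x)^N / N.factorial * gg f (j+N+1) t := by
        have hder : ∀ t ∈ Set.uIcc x b,
            HasDerivAt (fun t => (t-x)^N / N.factorial * gg f (j+N) t)
              ((t-x)^(N-1) / (N-1).factorial * gg f (j+N) t
                - (t-x)^N / N.factorial * gg f (j+N+1) t) t := by
          intro t ht
          have h1 : HasDerivAt (fun t => (t-x)^N / (N.factorial : ℝ))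
              ((t-x)^(N-1) / (N-1).factorial) t := by
            have : HasDerivAt (fun t : ℝ => (t-x)^N) (N * (t-x)^(N-1) * 1) t := by
              exact (((hasDerivAt_id t).sub_const x).pow N)
            have h2 := this.div_const (N.factorial : ℝ)
            refine h2.congr_deriv ?_
            symm
            rw [show N = (N-1) + 1 by omega, Nat.factorial_succ]
            push_cast
            field_simp
          have h2 := L2 hsmooth (j+N) (Lsub hx hb ht)
          have := h1.mul h2
          refine this.congr_deriv ?_
          ring
        have ftc := integral_eq_sub_of_hasDerivAt hder ?_
        · have hsplit : (∫ t in x..b, ((t-x)^(N-1) / (N-1).factorial * gg f (j+N) t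
                - (t-x)^N / N.factorial * gg f (j+N+1) t))
              = (∫ t in x..b, (t-x)^(N-1) / (N-1).factorial * gg f (j+N) t)
                - ∫ t in x..b, (t-x)^N / N.factorial * gg f (j+N+1) t :=
            integral_sub (Lint hsmooth (j+N) (N-1) hx hb) (Lint hsmooth (j+N+1) N hx hb)
          rw [hsplit] at ftc
          have hxx : ((x:ℝ)-x)^N = 0 := by
            rw [sub_self]; exact zero_pow (by omega)
          rw [hxx] at ftc
          simp at ftc
          have hcomm : gg f (j+N) b * (b-x)^N / N.factorial
              = (b-x)^N / N.factorial * gg f (j+N) b := by ring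
          rw [hcomm]
          linarith [ftc]
        · apply IntervalIntegrable.sub (Lint hsmooth (j+N) (N-1) hx hb)
            (Lint hsmooth (j+N+1) N hx hb)
      rw [key]
      have : j + (N+1) = j + N + 1 := by omega
      rw [this]
      simp only [Nat.add_sub_cancel]
      ring

section two
variable (hsmooth : ContDiffOn ℝ (⊤ : ℕ∞) f (Set.Ioi 0))
    (hcm : ∀ (k : ℕ) (x : ℝ), 0 < x → 0 ≤ (-1 : ℝ) ^ k * iteratedDeriv k f x)
include hsmooth hcm

theorem L4 (k : ℕ) {x : ℝ} (hx : 0 < x) : 0 ≤ gg f k x := hcm k x hx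

theorem L5 (k : ℕ) {x y : ℝ} (hx : 0 < x) (hxy : x ≤ y) : gg f k y ≤ gg f k x := by
  have h : AntitoneOn (gg f k) (Set.Ioi 0) := by
    apply antitoneOn_of_deriv_nonpos (convex_Ioi 0) (L3 hsmooth k)
    · intro t ht
      rw [interior_Ioi] at ht
      exact ((L2 hsmooth k ht).differentiableAt).differentiableWithinAt
    · intro t ht
      rw [interior_Ioi] at ht
      rw [(L2 hsmooth k ht).deriv]
      simp only [neg_nonpos]
      exact hcm (k+1) t ht
  exact h hx (lt_of_lt_of_le hx hxy) hxy

theorem LintNonneg (k p : ℕ) {x b : ℝ} (hx : 0 < x) (hb : x ≤ b) :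
    0 ≤ ∫ t in x..b, (t-x)^p / p.factorial * gg f k t := by
  apply intervalIntegral.integral_nonneg hb
  intro t ht
  have ht0 : 0 < t := lt_of_lt_of_le hx ht.1
  have h1 : (0:ℝ) ≤ (t-x)^p := pow_nonneg (by linarith [ht.1]) p
  have h2 := hcm k t ht0
  positivity

theorem LboundSum (j N : ℕ) (hN : 1 ≤ N) {x b : ℝ} (hx : 0 < x) (hb : x ≤ b) :
    (∑ i ∈ range N, gg f (j+i) b * (b-x)^i / i.factorial) ≤ gg f j x := by
  have := L6 hsmooth j N hN hx hb
  have h2 := LintNonneg hsmooth hcm (j+N) (N-1) hx hb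
  linarith

/-- Each factor of the boundary sum is nonnegative. -/
theorem LtermNonneg (j i : ℕ) {x b : ℝ} (hx : 0 < x) (hb : x ≤ b) (hb0 : 0 < b) :
    0 ≤ gg f (j+i) b * (b-x)^i / i.factorial := by
  have h1 := hcm (j+i) b hb0
  have h2 : (0:ℝ) ≤ (b-x)^i := pow_nonneg (by linarith) i
  positivity

/-- Integral remainder is at most `gg f j x`. -/
theorem LintLe (j N : ℕ) (hN : 1 ≤ N) {x b : ℝ} (hx : 0 < x) (hb : x ≤ b) :
    (∫ t in x..b, (t-x)^(N-1) / (N-1).factorial * gg f (j+N) t) ≤ gg f j x := by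
  have := L6 hsmooth j N hN hx hb
  have hb0 : 0 < b := lt_of_lt_of_le hx hb
  have h2 : 0 ≤ ∑ i ∈ range N, gg f (j+i) b * (b-x)^i / i.factorial :=
    Finset.sum_nonneg (fun i _ => LtermNonneg hsmooth hcm j i hx hb hb0)
  linarith

/-- Key decay estimate: `gg f (j+i+1) b * (b-x)^(i+1)/(i+1)! ≤ gg f j x`. -/
theorem Ldecay (j i : ℕ) {x b : ℝ} (hx : 0 < x) (hb : x ≤ b) :
    gg f (j+i+1) b * (b-x)^(i+1) / (i+1).factorial ≤ gg f j x := by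
  have hb0 : 0 < b := lt_of_lt_of_le hx hb
  have key := LintLe hsmooth hcm j (i+1) (by omega) hx hb
  simp only [Nat.add_sub_cancel] at key
  rw [show j + (i+1) = j + i + 1 from by omega] at key
  -- ∫ t in x..b, (t-x)^i/i! * gg f (j+i+1) t ≥ gg f (j+i+1) b * (b-x)^(i+1)/(i+1)!
  have hmono : ∀ t ∈ Set.Icc x b, (t-x)^i / i.factorial * gg f (j+i+1) b
      ≤ (t-x)^i / i.factorial * gg f (j+i+1) t := by
    intro t ht
    have h1 : (0:ℝ) ≤ (t-x)^i := pow_nonneg (by linarith [ht.1]) i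
    have h2 : gg f (j+i+1) b ≤ gg f (j+i+1) t := L5 hsmooth hcm (j+i+1) (lt_of_lt_of_le hx ht.1) ht.2
    have h3 : (0:ℝ) ≤ (t-x)^i / i.factorial := by positivity
    exact mul_le_mul_of_nonneg_left h2 h3
  have hint1 : IntervalIntegrable (fun t => (t-x)^i / i.factorial * gg f (j+i+1) b)
      MeasureTheory.volume x b := by
    apply ContinuousOn.intervalIntegrable; fun_prop
  have hge := intervalIntegral.integral_mono_on hb hint1 (Lint hsmooth (j+i+1) i hx hb) hmono
  have heval : (∫ t in x..b, (t-x)^i / i.factorial * gg f (j+i+1) b)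
      = gg f (j+i+1) b * (b-x)^(i+1) / (i+1).factorial := by
    have h5 : (∫ t in x..b, (t-x)^i / i.factorial * gg f (j+i+1) b)
        = (∫ t in x..b, (t-x)^i) * (gg f (j+i+1) b / i.factorial) := by
      rw [← intervalIntegral.integral_mul_const]
      apply intervalIntegral.integral_congr
      intro t ht; ring
    rw [h5]
    have h6 : (∫ t in x..b, (t-x)^i) = (b-x)^(i+1) / (i+1) := by
      have := intervalIntegral.integral_comp_sub_right (fun t => t^i) x (a := x) (b := b)
      rw [this]
      simp [integral_pow]
    rw [h6, Nat.factorial_succ]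
    push_cast
    field_simp
  rw [heval] at hge
  linarith
theorem Lint' (k p : ℕ) {x b : ℝ} (hx : 0 < x) (hb : x ≤ b) :
    IntervalIntegrable (fun t => (t - x)^p * gg f k t) MeasureTheory.volume x b := by
  apply ContinuousOn.intervalIntegrable
  apply ContinuousOn.mul
  · fun_prop
  · exact (L3 hsmooth k).mono (Lsub hx hb)

/-- Cauchy–Schwarz for the remainder integrals. -/
theorem LCS (M p : ℕ) {x b : ℝ} (hx : 0 < x) (hb : x ≤ b) :
    (∫ t in x..b, (t-x)^(p+1) * gg f M t)^2
      ≤ (∫ t in x..b, (t-x)^p * gg f M t) * (∫ t in x..b, (t-x)^(p+2) * gg f M t) := by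
  set A := ∫ t in x..b, (t-x)^p * gg f M t with hA
  set B := ∫ t in x..b, (t-x)^(p+1) * gg f M t with hB
  set C := ∫ t in x..b, (t-x)^(p+2) * gg f M t with hC
  have key : ∀ l : ℝ, 0 ≤ C * (l*l) + (-2*B) * l + A := by
    intro l
    have h0 : 0 ≤ ∫ t in x..b, ((t-x)^p * gg f M t * (1 - l*(t-x))^2) := by
      apply intervalIntegral.integral_nonneg hb
      intro t ht
      have h1 : (0:ℝ) ≤ (t-x)^p := pow_nonneg (by linarith [ht.1]) p
      have h2 := hcm M t (lt_of_lt_of_le hx ht.1)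
      have h2' : 0 ≤ gg f M t := h2
      positivity
    have hsplit : (∫ t in x..b, ((t-x)^p * gg f M t * (1 - l*(t-x))^2))
        = A + (-2*B) * l + C * (l*l) := by
      have hcongr : ∀ t ∈ Set.uIcc x b, ((t-x)^p * gg f M t * (1 - l*(t-x))^2)
          = ((t-x)^p * gg f M t) + ((-2*l) * ((t-x)^(p+1) * gg f M t)
              + (l^2) * ((t-x)^(p+2) * gg f M t)) := by
        intro t ht
        ring
      rw [intervalIntegral.integral_congr hcongr]
      rw [intervalIntegral.integral_add (Lint' hsmooth hcm M p hx hb)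
        (((Lint' hsmooth hcm M (p+1) hx hb).const_mul _).add
          ((Lint' hsmooth hcm M (p+2) hx hb).const_mul _)),
        intervalIntegral.integral_add ((Lint' hsmooth hcm M (p+1) hx hb).const_mul _)
          ((Lint' hsmooth hcm M (p+2) hx hb).const_mul _),
        intervalIntegral.integral_const_mul, intervalIntegral.integral_const_mul]
      ring
    rw [hsplit] at h0
    linarith
  have hd := discrim_le_zero key
  rw [discrim] at hd
  nlinarith [hd]
end two

section three
variable (hsmooth : ContDiffOn ℝ (⊤ : ℕ∞) f (Set.Ioi 0))
    (hcm : ∀ (k : ℕ) (x : ℝ), 0 < x → 0 ≤ (-1 : ℝ) ^ k * iteratedDeriv k f x)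
include hsmooth hcm

/-- With the fixed finite-order constant `(p+2)/(p+1)`. -/
theorem LA1 (k p : ℕ) {x b : ℝ} (hx : 0 < x) (hb : x ≤ b) :
    (∫ t in x..b, (t-x)^(p+1) / (p+1).factorial * gg f (k+p+3) t)^2
      ≤ ((p+2:ℝ)/(p+1)) * (gg f k x * gg f (k+2) x) := by
  have e0 : k + 2 + (p+1) = k + p + 3 := by omega
  have e2 : k + (p+3) = k + p + 3 := by omega
  have hI0le : (∫ t in x..b, (t-x)^p / p.factorial * gg f (k+p+3) t) ≤ gg f (k+2) x := by
    have := LintLe hsmooth hcm (k+2) (p+1) (by omega) hx hb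
    simpa [e0] using this
  have hI2le : (∫ t in x..b, (t-x)^(p+2) / (p+2).factorial * gg f (k+p+3) t) ≤ gg f k x := by
    have := LintLe hsmooth hcm k (p+3) (by omega) hx hb
    simpa [e2, show p + 3 - 1 = p + 2 from by omega] using this
  have hI0nn : 0 ≤ (∫ t in x..b, (t-x)^p / p.factorial * gg f (k+p+3) t) :=
    LintNonneg hsmooth hcm (k+p+3) p hx hb
  have hI2nn : 0 ≤ (∫ t in x..b, (t-x)^(p+2) / (p+2).factorial * gg f (k+p+3) t) :=
    LintNonneg hsmooth hcm (k+p+3) (p+2) hx hb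
  have hCS := LCS hsmooth hcm (k+p+3) p hx hb
  have conv : ∀ q : ℕ, (∫ t in x..b, (t-x)^q / q.factorial * gg f (k+p+3) t)
      = (∫ t in x..b, (t-x)^q * gg f (k+p+3) t) / q.factorial := by
    intro q
    rw [← intervalIntegral.integral_div]
    apply intervalIntegral.integral_congr
    intro t ht; ring
  rw [conv] at hI0le hI2le hI0nn hI2nn ⊢
  set A := ∫ t in x..b, (t-x)^p * gg f (k+p+3) t with hAdef
  set B := ∫ t in x..b, (t-x)^(p+1) * gg f (k+p+3) t with hBdef
  set C := ∫ t in x..b, (t-x)^(p+2) * gg f (k+p+3) t with hCdef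
  have hk0 := L4 hsmooth hcm k hx
  have hk2 := L4 hsmooth hcm (k+2) hx
  have hF0 : (0:ℝ) < (p.factorial : ℝ) := by positivity
  have hF1 : (0:ℝ) < ((p+1).factorial : ℝ) := by positivity
  have hF2 : (0:ℝ) < ((p+2).factorial : ℝ) := by positivity
  have hfac : ((p+1).factorial : ℝ)^2 * ((p+2:ℝ)/(p+1)) = (p.factorial : ℝ) * ((p+2).factorial) := by
    rw [Nat.factorial_succ (p+1), Nat.factorial_succ p]
    push_cast
    field_simp
    ring
  have hA' : A ≤ gg f (k+2) x * (p.factorial : ℝ) := by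
    rw [div_le_iff₀ hF0] at hI0le; linarith
  have hC' : C ≤ gg f k x * ((p+2).factorial : ℝ) := by
    rw [div_le_iff₀ hF2] at hI2le; linarith
  have hAnn : 0 ≤ A := by
    have h := hI0nn
    rw [le_div_iff₀ hF0] at h; linarith
  have hCnn : 0 ≤ C := by
    have h := hI2nn
    rw [le_div_iff₀ hF2] at h; linarith
  have key : B^2 ≤ (gg f (k+2) x * (p.factorial : ℝ)) * (gg f k x * ((p+2).factorial : ℝ)) :=
    le_trans hCS (mul_le_mul hA' hC' hCnn (by positivity))
  rw [div_pow, div_le_iff₀ (by positivity : (0:ℝ) < ((p+1).factorial:ℝ)^2)]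
  calc B^2 ≤ (gg f (k+2) x * (p.factorial : ℝ)) * (gg f k x * ((p+2).factorial : ℝ)) := key
    _ = ((p.factorial : ℝ) * ((p+2).factorial)) * (gg f k x * gg f (k+2) x) := by ring
    _ = ((p+2:ℝ)/(p+1)) * (gg f k x * gg f (k+2) x) * ((p+1).factorial:ℝ)^2 := by
        rw [← hfac]; ring

/-- boundary sum bound -/
theorem LB0 (k p : ℕ) {x b : ℝ} (hx : 0 < x) (hb : x < b) :
    (∑ i ∈ range (p+2), gg f (k+1+i) b * (b-x)^i / i.factorial)
      ≤ ((p+2:ℝ)*(p+2)) * gg f k x / (b-x) := by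
  have hbb : x ≤ b := le_of_lt hb
  have hb0 : 0 < b := lt_of_lt_of_le hx hbb
  have hpos : (0:ℝ) < b - x := by linarith
  have hk0 := L4 hsmooth hcm k hx
  have hterm : ∀ i ∈ range (p+2), gg f (k+1+i) b * (b-x)^i / i.factorial
      ≤ ((p+2:ℝ)) * gg f k x / (b-x) := by
    intro i hi
    have hd := Ldecay hsmooth hcm k i hx hbb
    have hip : (i:ℝ) + 1 ≤ (p+2:ℝ) := by
      have h2 : i + 1 ≤ p + 2 := by have := Finset.mem_range.mp hi; omega
      exact_mod_cast h2
    have e : k + 1 + i = k + i + 1 := by omega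
    rw [e, div_le_div_iff₀ (by positivity) hpos]
    have hfs : ((i+1).factorial:ℝ) = ((i:ℝ)+1) * i.factorial := by
      rw [Nat.factorial_succ]; push_cast; ring
    have hd' : gg f (k+i+1) b * (b-x)^(i+1) ≤ gg f k x * (((i:ℝ)+1) * i.factorial) := by
      rw [div_le_iff₀ (by positivity)] at hd
      rw [← hfs]; exact hd
    have hfi : (0:ℝ) ≤ (i.factorial : ℝ) := by positivity
    calc gg f (k+i+1) b * (b-x)^i * (b-x) = gg f (k+i+1) b * (b-x)^(i+1) := by ring
      _ ≤ gg f k x * (((i:ℝ)+1) * i.factorial) := hd'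
      _ ≤ (p+2:ℝ) * gg f k x * i.factorial := by nlinarith [mul_le_mul_of_nonneg_right hip (mul_nonneg hk0 hfi)]
  calc (∑ i ∈ range (p+2), gg f (k+1+i) b * (b-x)^i / i.factorial)
      ≤ ∑ _i ∈ range (p+2), ((p+2:ℝ)) * gg f k x / (b-x) := Finset.sum_le_sum hterm
    _ = ((p+2:ℝ)*(p+2)) * gg f k x / (b-x) := by
        rw [Finset.sum_const, Finset.card_range, nsmul_eq_mul]
        push_cast; ring
end three

section four
variable (hsmooth : ContDiffOn ℝ (⊤ : ℕ∞) f (Set.Ioi 0))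
    (hcm : ∀ (k : ℕ) (x : ℝ), 0 < x → 0 ≤ (-1 : ℝ) ^ k * iteratedDeriv k f x)
include hsmooth hcm

theorem LA2 (k p : ℕ) {x : ℝ} (hx : 0 < x) :
    (gg f (k+1) x)^2 ≤ ((p+2:ℝ)/(p+1)) * (gg f k x * gg f (k+2) x) := by
  have hk0 := L4 hsmooth hcm k hx
  have hk1 := L4 hsmooth hcm (k+1) hx
  have hk2 := L4 hsmooth hcm (k+2) hx
  set R := ((p+2:ℝ)/(p+1)) * (gg f k x * gg f (k+2) x) with hRdef
  have hR : 0 ≤ R := by positivity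
  have key : ∀ ε > 0, gg f (k+1) x ≤ Real.sqrt R + ε := by
    intro ε hε
    set D := ((p+2:ℝ)*(p+2)) * gg f k x with hDdef
    have hD : 0 ≤ D := by positivity
    set b := x + D/ε + 1 with hbdef
    have hDε : 0 ≤ D/ε := by positivity
    have hb : x < b := by rw [hbdef]; linarith
    have hbb : x ≤ b := le_of_lt hb
    have hL6 := L6 hsmooth (k+1) (p+2) (by omega) hx hbb
    rw [show p+2-1 = p+1 from by omega, show k+1+(p+2) = k+p+3 from by omega] at hL6
    have hI2 := LA1 hsmooth hcm k p hx hbb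
    have hInn : 0 ≤ ∫ t in x..b, (t-x)^(p+1) / (p+1).factorial * gg f (k+p+3) t :=
      LintNonneg hsmooth hcm (k+p+3) (p+1) hx hbb
    have hIle : (∫ t in x..b, (t-x)^(p+1) / (p+1).factorial * gg f (k+p+3) t) ≤ Real.sqrt R := by
      rw [show (∫ t in x..b, (t-x)^(p+1) / (p+1).factorial * gg f (k+p+3) t)
        = Real.sqrt ((∫ t in x..b, (t-x)^(p+1) / (p+1).factorial * gg f (k+p+3) t)^2) from
          (Real.sqrt_sq hInn).symm]
      exact Real.sqrt_le_sqrt hI2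
    have hB0 := LB0 hsmooth hcm k p hx hb
    have hB0ε : ((p+2:ℝ)*(p+2)) * gg f k x / (b-x) ≤ ε := by
      have h1 : b - x = D/ε + 1 := by rw [hbdef]; ring
      rw [h1, div_le_iff₀ (by positivity)]
      have h2 : ε * (D/ε + 1) = D + ε := by field_simp
      rw [h2]
      linarith
    linarith
  have hle : gg f (k+1) x ≤ Real.sqrt R := by
    apply le_of_forall_pos_le_add
    intro ε hε
    linarith [key ε hε]
  calc (gg f (k+1) x)^2 ≤ (Real.sqrt R)^2 := by
        apply pow_le_pow_left₀ hk1 hle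
    _ = R := Real.sq_sqrt hR

/-- Log-convexity of `k ↦ (-1)^k f^(k)(x)`. -/
theorem LA (k : ℕ) {x : ℝ} (hx : 0 < x) :
    (gg f (k+1) x)^2 ≤ gg f k x * gg f (k+2) x := by
  have hk0 := L4 hsmooth hcm k hx
  have hk2 := L4 hsmooth hcm (k+2) hx
  set P := gg f k x * gg f (k+2) x with hPdef
  have hP : 0 ≤ P := mul_nonneg hk0 hk2
  apply le_of_forall_pos_le_add
  intro ε hε
  obtain ⟨p, hp⟩ := exists_nat_gt (P/ε)
  have h1 := LA2 hsmooth hcm k p hx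
  have h2 : ((p+2:ℝ)/(p+1)) * P = P + P/(p+1) := by
    field_simp
    ring
  rw [← hPdef] at h1
  have h3 : P/(p+1:ℝ) ≤ ε := by
    rw [div_le_iff₀ (by positivity)]
    rw [div_lt_iff₀ hε] at hp
    nlinarith
  linarith [h1, h2.symm.le]
end four



section comb
variable (G : ℕ → ℝ) (hnn : ∀ k, 0 ≤ G k)
    (hlc : ∀ k, G (k+1)^2 ≤ G k * G (k+2))
include hnn hlc

theorem C1 (a d : ℕ) : G (a+1) * G (a+d+1) ≤ G a * G (a+d+2) := by
  induction d with
  | zero => have := hlc a; nlinarith [this]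
  | succ d ih =>
    show G (a+1) * G (a+d+2) ≤ G a * G (a+d+3)
    rcases eq_or_lt_of_le (hnn (a+d+2)) with h0 | hpos
    · rw [← h0, mul_zero]
      exact mul_nonneg (hnn a) (hnn _)
    · have h1 : 0 < G (a+d+1) := by
        rcases eq_or_lt_of_le (hnn (a+d+1)) with h1 | h1
        · exfalso
          have h2 := hlc (a+d+1)
          rw [← h1, zero_mul] at h2
          nlinarith [hpos]
        · exact h1
      have h2 := hlc (a+d+1)
      have h3 : G (a+1) * G (a+d+1) * (G (a+d+2) * G (a+d+2))
          ≤ (G a * G (a+d+2)) * (G (a+d+1) * G (a+d+3)) := by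
        have := mul_le_mul ih h2 (sq_nonneg _) (mul_nonneg (hnn a) (hnn _))
        nlinarith [this]
      nlinarith [h3, mul_pos h1 hpos, mul_nonneg (hnn (a+1)) (hnn (a+d+2)),
        mul_nonneg (hnn a) (hnn (a+d+3))]

theorem C2 (d : ℕ) : ∀ a b : ℕ, a + d ≤ b → G (a+d) * G b ≤ G a * G (b+d) := by
  induction d with
  | zero => intro a b _; simp
  | succ d ih =>
    intro a b h
    obtain ⟨e, he⟩ : ∃ e, b = a + d + e + 1 := ⟨b - (a+d) - 1, by omega⟩
    subst he
    have step : G (a+d+1) * G (a+d+e+1) ≤ G (a+d) * G (a+d+e+2) := C1 G hnn hlc (a+d) e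
    have ih' := ih a (a+d+e+2) (by omega)
    rw [show a + (d+1) = a+d+1 from rfl, show a+d+e+1+(d+1) = a+d+e+2+d from by omega]
    exact le_trans step ih'

/-- Spread inequality: for `p ≤ q ≤ r ≤ s` with `p+s = q+r`, `G q * G r ≤ G p * G s`. -/
theorem C3 {p q r s : ℕ} (hpq : p ≤ q) (hqr : q ≤ r) (hrs : r ≤ s)
    (hsum : p + s = q + r) : G q * G r ≤ G p * G s := by
  obtain ⟨d, hd⟩ : ∃ d, q = p + d := ⟨q - p, by omega⟩
  have hs : s = r + d := by omega
  subst hd hs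
  exact C2 G hnn hlc d p r (by omega)
end comb

theorem schur (G : ℕ → ℝ) (hnn : ∀ k, 0 ≤ G k) (hlc : ∀ k, G (k+1)^2 ≤ G k * G (k+2)) :
    ∀ (D : ℕ) {L : ℕ} (n m : Fin L → ℕ), Antitone n → Antitone m →
    (∀ k : Fin L, ∑ j ∈ Finset.Iic k, m j ≤ ∑ j ∈ Finset.Iic k, n j) →
    (∑ j, n j = ∑ j, m j) →
    (∑ j, ((n j : ℤ) - m j).natAbs = D) →
    ∏ j, G (m j) ≤ ∏ j, G (n j) := by
  intro D
  induction D using Nat.strong_induction_on with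
  | _ D ih =>
  intro L n m hn hm hmaj htot hD
  by_cases hnm : m = n
  · rw [hnm]
  -- least index where they differ
  have hS1 : (univ.filter (fun t => n t ≠ m t)).Nonempty := by
    rw [Finset.filter_nonempty_iff]
    by_contra h
    push_neg at h
    exact hnm (funext fun t => ((h t (mem_univ t)).symm))
  set i := (univ.filter (fun t => n t ≠ m t)).min' hS1 with hidef
  have hi_mem : n i ≠ m i := by
    have := Finset.min'_mem _ hS1
    exact (Finset.mem_filter.mp this).2
  have hlt_i : ∀ t, t < i → n t = m t := by
    intro t ht
    by_contra hne
    exact absurd ht (not_lt.mpr (Finset.min'_le _ _ (by simp [hne])))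
  have hmi : m i < n i := by
    have h1 := hmaj i
    have h2 : Finset.Iic i = insert i (Finset.Iio i) := (Finset.Iio_insert i).symm
    have h3 : ∑ t ∈ Finset.Iio i, m t = ∑ t ∈ Finset.Iio i, n t :=
      Finset.sum_congr rfl (fun t ht => (hlt_i t (Finset.mem_Iio.mp ht)).symm)
    rw [h2, Finset.sum_insert (by simp), Finset.sum_insert (by simp), h3] at h1
    have h4 : m i ≤ n i := by omega
    exact lt_of_le_of_ne h4 (Ne.symm hi_mem)
  -- least index where m exceeds n
  have hS2 : (univ.filter (fun t => n t < m t)).Nonempty := by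
    rw [Finset.filter_nonempty_iff]
    by_contra h
    push_neg at h
    have : ∑ t, m t < ∑ t, n t :=
      Finset.sum_lt_sum (fun t _ => h t (mem_univ t)) ⟨i, mem_univ i, hmi⟩
    omega
  set j0 := (univ.filter (fun t => n t < m t)).min' hS2 with hj0def
  have hj0_mem : n j0 < m j0 := (Finset.mem_filter.mp (Finset.min'_mem _ hS2)).2
  have hj0_min : ∀ t, n t < m t → j0 ≤ t := fun t ht => Finset.min'_le _ _ (by simp [ht])
  -- last index of the constancy run of m at level m j0
  have hSj : (univ.filter (fun t => m j0 ≤ m t)).Nonempty := ⟨j0, by simp⟩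
  set j := (univ.filter (fun t => m j0 ≤ m t)).max' hSj with hjdef
  have hj0j : j0 ≤ j := Finset.le_max' _ _ (by simp)
  have hmjj0 : m j = m j0 :=
    le_antisymm (hm hj0j) ((Finset.mem_filter.mp (Finset.max'_mem _ hSj)).2)
  have hjgt : ∀ t, j < t → m t < m j0 := by
    intro t ht
    by_contra h
    push_neg at h
    exact absurd ht (not_lt.mpr (Finset.le_max' _ _ (by simp [h])))
  have hij0 : i < j0 := by
    rcases lt_trichotomy i j0 with h|h|h
    · exact h
    · exfalso; rw [h] at hmi; omega
    · exfalso; have := hlt_i j0 h; omega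
  have hij : i < j := lt_of_lt_of_le hij0 hj0j
  have hijne : i ≠ j := ne_of_lt hij
  have hmj1 : 1 ≤ m j := by omega
  -- the transferred vector
  set m' := Function.update (Function.update m i (m i + 1)) j (m j - 1) with hm'def
  have hm'i : m' i = m i + 1 := by
    rw [hm'def, Function.update_of_ne hijne, Function.update_self]
  have hm'j : m' j = m j - 1 := by
    rw [hm'def, Function.update_self]
  have hm'other : ∀ t, t ≠ i → t ≠ j → m' t = m t := by
    intro t hti htj
    rw [hm'def, Function.update_of_ne htj, Function.update_of_ne hti]
  -- antitone
  have hm'anti : Antitone m' := by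
    intro a b hab
    rcases eq_or_lt_of_le hab with rfl|hab'
    · exact le_refl _
    by_cases hbi : b = i
    · subst hbi
      have hai : a ≠ i := ne_of_lt hab'
      have haj : a ≠ j := ne_of_lt (lt_trans hab' hij)
      rw [hm'i, hm'other a hai haj]
      have := hlt_i a hab'
      have := hn (le_of_lt hab')
      omega
    by_cases hbj : b = j
    · subst hbj
      rw [hm'j]
      by_cases hai : a = i
      · subst hai
        rw [hm'i]
        have := hm (le_of_lt hab')
        omega
      · have haj : a ≠ j := ne_of_lt hab'
        rw [hm'other a hai haj]
        have := hm (le_of_lt hab')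
        omega
    · rw [hm'other b hbi hbj]
      by_cases hai : a = i
      · subst hai
        rw [hm'i]
        have := hm (le_of_lt hab')
        omega
      by_cases haj : a = j
      · subst haj
        rw [hm'j]
        have hbgt := hjgt b hab'
        omega
      · rw [hm'other a hai haj]
        exact hm (le_of_lt hab')
  -- sums of m' over lower sets
  have hsum_lt : ∀ (s : Finset (Fin L)), i ∉ s → j ∉ s →
      ∑ t ∈ s, m' t = ∑ t ∈ s, m t := by
    intro s hi hj
    refine Finset.sum_congr rfl (fun t ht => hm'other t ?_ ?_)
    · intro h; rw [h] at ht; exact hi ht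
    · intro h; rw [h] at ht; exact hj ht
  have hsum_mid : ∀ (s : Finset (Fin L)), i ∈ s → j ∉ s →
      ∑ t ∈ s, m' t = (∑ t ∈ s, m t) + 1 := by
    intro s his hjs
    have h1 : ∑ t ∈ s, m' t = ∑ t ∈ s, Function.update m i (m i + 1) t :=
      Finset.sum_congr rfl (fun t ht => by
        rw [hm'def, Function.update_of_ne (fun h => hjs (by rw [← h]; exact ht))])
    rw [h1, Finset.sum_update_of_mem his, Finset.sum_eq_sum_sdiff_singleton_add his m]
    omega
  have hsum_full : ∀ (s : Finset (Fin L)), i ∈ s → j ∈ s →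
      ∑ t ∈ s, m' t = ∑ t ∈ s, m t := by
    intro s his hjs
    have his' : i ∈ s \ {j} := Finset.mem_sdiff.mpr ⟨his, by simp [hijne]⟩
    have h1 : ∑ t ∈ s, m' t
        = (m j - 1) + ∑ t ∈ s \ {j}, Function.update m i (m i + 1) t := by
      rw [hm'def, Finset.sum_update_of_mem hjs]
    rw [h1, Finset.sum_update_of_mem his',
      Finset.sum_eq_sum_sdiff_singleton_add hjs m,
      Finset.sum_eq_sum_sdiff_singleton_add his' m]
    omega
  -- strict inequality of partial sums in the middle range
  have hstrict : ∀ k : Fin L, i ≤ k → k < j →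
      ∑ t ∈ Finset.Iic k, m t < ∑ t ∈ Finset.Iic k, n t := by
    intro k hik hkj
    rcases lt_or_eq_of_le (hmaj k) with h|h
    · exact h
    exfalso
    have hex : ∃ t, t ∈ Finset.Iic k ∧ n t < m t := by
      by_contra hc
      push_neg at hc
      have hlt : ∑ t ∈ Finset.Iic k, m t < ∑ t ∈ Finset.Iic k, n t := by
        apply Finset.sum_lt_sum (fun t ht => not_lt.mp (fun hh => absurd hh (not_lt.mpr (hc t ht))))
          ⟨i, Finset.mem_Iic.mpr hik, hmi⟩
      omega
    obtain ⟨t0, ht0k, ht0⟩ := hex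
    have hj0k : j0 ≤ k := le_trans (hj0_min t0 ht0) (Finset.mem_Iic.mp ht0k)
    have hsplitset : Finset.Iic j = Finset.Iic k ∪ Finset.Ioc k j := by
      ext t
      simp only [Finset.mem_Iic, Finset.mem_union, Finset.mem_Ioc]
      constructor
      · intro h'
        rcases le_or_gt t k with h2|h2
        · exact Or.inl h2
        · exact Or.inr ⟨h2, h'⟩
      · rintro (h'|⟨h1,h2⟩)
        · exact le_trans h' (le_of_lt hkj)
        · exact h2
    have hdisj : Disjoint (Finset.Iic k) (Finset.Ioc k j) := by
      rw [Finset.disjoint_left]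
      intro t ht1 ht2
      rw [Finset.mem_Iic] at ht1
      rw [Finset.mem_Ioc] at ht2
      exact absurd ht1 (not_le.mpr ht2.1)
    have hIocne : (Finset.Ioc k j).Nonempty := ⟨j, Finset.mem_Ioc.mpr ⟨hkj, le_refl j⟩⟩
    have hIocstrict : ∀ t ∈ Finset.Ioc k j, n t < m t := by
      intro t ht
      rw [Finset.mem_Ioc] at ht
      have h1 : j0 ≤ t := le_trans hj0k (le_of_lt ht.1)
      have h2 : m t = m j0 := le_antisymm (hm h1) (by rw [← hmjj0]; exact hm ht.2)
      have h3 : n t ≤ n j0 := hn h1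
      omega
    have hlt2 : ∑ t ∈ Finset.Ioc k j, n t < ∑ t ∈ Finset.Ioc k j, m t :=
      Finset.sum_lt_sum_of_nonempty hIocne hIocstrict
    have hmj := hmaj j
    rw [hsplitset, Finset.sum_union hdisj, Finset.sum_union hdisj] at hmj
    omega
  -- majorization for m'
  have hmaj' : ∀ k : Fin L, ∑ t ∈ Finset.Iic k, m' t ≤ ∑ t ∈ Finset.Iic k, n t := by
    intro k
    rcases lt_or_ge k i with h1|h1
    · rw [hsum_lt _ (fun hh => (not_le.mpr h1) (Finset.mem_Iic.mp hh))
        (fun hh => (not_le.mpr (lt_trans h1 hij)) (Finset.mem_Iic.mp hh))]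
      exact hmaj k
    rcases lt_or_ge k j with h2|h2
    · rw [hsum_mid _ (Finset.mem_Iic.mpr h1) (fun hh => (not_le.mpr h2) (Finset.mem_Iic.mp hh))]
      have := hstrict k h1 h2
      omega
    · rw [hsum_full _ (Finset.mem_Iic.mpr (le_trans (le_of_lt hij) h2)) (Finset.mem_Iic.mpr h2)]
      exact hmaj k
  have htot' : ∑ t, n t = ∑ t, m' t := by
    rw [hsum_full univ (mem_univ i) (mem_univ j)]
    exact htot
  -- the measure decreases by 2
  have hnj : n j < m j := by
    have := hn hj0j
    omega
  have hji : j ∈ univ.erase i := Finset.mem_erase.mpr ⟨Ne.symm hijne, mem_univ j⟩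
  set F' : Fin L → ℕ := fun t => ((n t : ℤ) - m' t).natAbs with hF'def
  set F : Fin L → ℕ := fun t => ((n t : ℤ) - m t).natAbs with hFdef
  have e1 : ∑ t, F' t = F' i + ∑ t ∈ univ.erase i, F' t :=
    (Finset.add_sum_erase univ F' (mem_univ i)).symm
  have e2 : ∑ t ∈ univ.erase i, F' t = F' j + ∑ t ∈ (univ.erase i).erase j, F' t :=
    (Finset.add_sum_erase (univ.erase i) F' hji).symm
  have e1' : ∑ t, F t = F i + ∑ t ∈ univ.erase i, F t :=
    (Finset.add_sum_erase univ F (mem_univ i)).symm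
  have e2' : ∑ t ∈ univ.erase i, F t = F j + ∑ t ∈ (univ.erase i).erase j, F t :=
    (Finset.add_sum_erase (univ.erase i) F hji).symm
  have hDF : ∑ t, F t = D := hD
  have hrestF : ∑ t ∈ (univ.erase i).erase j, F' t = ∑ t ∈ (univ.erase i).erase j, F t := by
    refine Finset.sum_congr rfl (fun t ht => ?_)
    have ht1 : t ≠ j := (Finset.mem_erase.mp ht).1
    have ht2 : t ≠ i := (Finset.mem_erase.mp (Finset.mem_erase.mp ht).2).1
    simp only [hF'def, hFdef, hm'other t ht2 ht1]
  have hFi : F' i + 1 = F i := by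
    simp only [hF'def, hFdef, hm'i]
    omega
  have hFj : F' j + 1 = F j := by
    simp only [hF'def, hFdef, hm'j]
    omega
  have hD2 : 2 ≤ D := by omega
  have hD' : ∑ t, F' t = D - 2 := by omega
  -- product step : transfer increases the product
  have key : G (m i) * G (m j) ≤ G (m i + 1) * G (m j - 1) := by
    have h3 := C3 G hnn hlc (p := m j - 1) (q := m j) (r := m i) (s := m i + 1)
      (by omega) (hm (le_of_lt hij)) (by omega) (by omega)
    calc G (m i) * G (m j) = G (m j) * G (m i) := mul_comm _ _
      _ ≤ G (m j - 1) * G (m i + 1) := h3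
      _ = G (m i + 1) * G (m j - 1) := mul_comm _ _
  have hrest_nn : 0 ≤ ∏ t ∈ (univ.erase i).erase j, G (m t) :=
    Finset.prod_nonneg fun t _ => hnn _
  have q1 : ∏ t, G (m t) = G (m i) * (G (m j) * ∏ t ∈ (univ.erase i).erase j, G (m t)) := by
    rw [Finset.mul_prod_erase (univ.erase i) (fun t => G (m t)) hji,
      Finset.mul_prod_erase univ (fun t => G (m t)) (mem_univ i)]
  have hrestprod : ∏ t ∈ (univ.erase i).erase j, G (m' t)
      = ∏ t ∈ (univ.erase i).erase j, G (m t) := by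
    refine Finset.prod_congr rfl (fun t ht => ?_)
    have ht1 : t ≠ j := (Finset.mem_erase.mp ht).1
    have ht2 : t ≠ i := (Finset.mem_erase.mp (Finset.mem_erase.mp ht).2).1
    rw [hm'other t ht2 ht1]
  have q1' : ∏ t, G (m' t) = G (m i + 1) * (G (m j - 1) * ∏ t ∈ (univ.erase i).erase j, G (m t)) := by
    rw [← hrestprod, ← hm'i, ← hm'j]
    rw [Finset.mul_prod_erase (univ.erase i) (fun t => G (m' t)) hji,
      Finset.mul_prod_erase univ (fun t => G (m' t)) (mem_univ i)]
  have step : ∏ t, G (m t) ≤ ∏ t, G (m' t) := by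
    rw [q1, q1', ← mul_assoc, ← mul_assoc]
    exact mul_le_mul_of_nonneg_right key hrest_nn
  exact le_trans step (ih (D - 2) (by omega) n m' hn hm'anti hmaj' htot' hD')


open Finset

/-- **Schur-convexity of products of derivatives of completely monotone functions.**
If `f` is completely monotone on `(0,∞)` and `n, m : Fin L → ℕ` are nonincreasing
integer vectors with `n` majorizing `m`, then
`∏ⱼ (-1)^{mⱼ} f^{(mⱼ)}(x) ≤ ∏ⱼ (-1)^{nⱼ} f^{(nⱼ)}(x)` for all `x > 0`. -/
theorem prod_derivs_schur_convex (f : ℝ → ℝ)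
    (hsmooth : ContDiffOn ℝ (⊤ : ℕ∞) f (Set.Ioi 0))
    (hcm : ∀ (k : ℕ) (x : ℝ), 0 < x → 0 ≤ (-1 : ℝ) ^ k * iteratedDeriv k f x)
    {L : ℕ} (n m : Fin L → ℕ) (hn : Antitone n) (hm : Antitone m)
    (hmaj : ∀ k : Fin L, ∑ j ∈ Finset.Iic k, m j ≤ ∑ j ∈ Finset.Iic k, n j)
    (htot : ∑ j, n j = ∑ j, m j)
    (x : ℝ) (hx : 0 < x) :
    ∏ j, ((-1 : ℝ) ^ (m j) * iteratedDeriv (m j) f x)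
      ≤ ∏ j, ((-1 : ℝ) ^ (n j) * iteratedDeriv (n j) f x) := by
  have hnn : ∀ k, 0 ≤ gg f k x := fun k => hcm k x hx
  have hlc : ∀ k, (gg f (k+1) x)^2 ≤ gg f k x * gg f (k+2) x :=
    fun k => LA hsmooth hcm k hx
  exact schur (fun k => gg f k x) hnn hlc (∑ j, ((n j : ℤ) - m j).natAbs) n m hn hm hmaj htot rfl
end

section
/- Let p ≪ q be probability measures with both (dp/dq) and its pseudo-inverse (dp/dq)⁻¹ essentially bounded with respect to q. Then α ↦ Q_α(p,q) = ∫ (dp/dq)^α dq extends to an entire function on ℂ; specifically for α = ±a + ib with a > 0 one has |Q_α(p,q)| ≤ ‖(dp/dq)^{±1}‖_{L^∞(q)}^a < ∞. -/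
/-!
On `{dp/dq ≠ 0}` the log-likelihood ratio `log (dp/dq)` is essentially bounded, between
`-log c` and `log C`, and the integrand is `exp (α log (dp/dq))` there. Hence `F` is the complex
moment generating function of a bounded random variable under `q` restricted to that set, and
such a function is entire. The bounds on vertical lines come pointwise from `‖t ^ α‖ = t ^ re α`.
-/

open MeasureTheory Complex ProbabilityTheory Set
open scoped ENNReal

/-- Unlike `Complex.cpow`, this gives `0 ^ 0 = 0`; it is the pseudo-power `(dp/dq) ^ α`. -/
noncomputable def pseudoCpow (t : ℝ) (α : ℂ) : ℂ := if t = 0 then 0 else (t : ℂ) ^ α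

lemma norm_pseudoCpow {t : ℝ} (ht : 0 ≤ t) (α : ℂ) :
    ‖pseudoCpow t α‖ = if t = 0 then 0 else t ^ α.re := by
  unfold pseudoCpow
  split_ifs with h
  · exact norm_zero
  · exact norm_cpow_eq_rpow_re_of_pos (ht.lt_of_ne' h) α

lemma norm_pseudoCpow_le_rpow {t C : ℝ} {α : ℂ} (ht : 0 ≤ t) (htC : t ≤ C) (hα : 0 ≤ α.re) :
    ‖pseudoCpow t α‖ ≤ C ^ α.re := by
  rw [norm_pseudoCpow ht]
  split_ifs
  · exact Real.rpow_nonneg (ht.trans htC) _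
  · exact Real.rpow_le_rpow ht htC hα

lemma norm_pseudoCpow_le_inv_rpow {t c : ℝ} {α : ℂ} (ht : 0 ≤ t) (htc : t⁻¹ ≤ c)
    (hα : α.re ≤ 0) : ‖pseudoCpow t α‖ ≤ c ^ (-α.re) := by
  rw [norm_pseudoCpow ht]
  split_ifs
  · exact Real.rpow_nonneg ((inv_nonneg.2 ht).trans htc) _
  · calc t ^ α.re = t⁻¹ ^ (-α.re) := by rw [Real.inv_rpow ht, Real.rpow_neg ht, inv_inv]
      _ ≤ c ^ (-α.re) := Real.rpow_le_rpow (inv_nonneg.2 ht) htc (neg_nonneg.2 hα)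

lemma pseudoCpow_toReal_ofReal {t : ℝ≥0∞} (ht : t ≠ ∞) (α : ℝ) :
    pseudoCpow t.toReal α = ((if t = 0 then 0 else t ^ α).toReal : ℂ) := by
  unfold pseudoCpow
  by_cases h0 : t = 0
  · simp [h0]
  · rw [if_neg (ENNReal.toReal_ne_zero.2 ⟨h0, ht⟩), if_neg h0, ← ENNReal.toReal_rpow,
      ofReal_cpow ENNReal.toReal_nonneg]

lemma log_mem_Icc_of_le_of_inv_le {t C c : ℝ} (ht : 0 < t) (htC : t ≤ C) (htc : t⁻¹ ≤ c) :
    Real.log t ∈ Icc (-Real.log c) (Real.log C) := by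
  refine ⟨?_, Real.log_le_log ht htC⟩
  rw [neg_le, ← Real.log_inv]
  exact Real.log_le_log (inv_pos.2 ht) htc

section

variable {Ω : Type*} [MeasurableSpace Ω] {μ : Measure Ω}

lemma differentiable_complexMGF_of_mem_Icc [IsFiniteMeasure μ] {Y : Ω → ℝ} {a b : ℝ}
    (hY : AEMeasurable Y μ) (hab : ∀ᵐ ω ∂μ, Y ω ∈ Icc a b) :
    Differentiable ℂ (complexMGF Y μ) := by
  have : integrableExpSet Y μ = univ :=
    eq_univ_of_forall fun _ ↦ integrable_exp_mul_of_mem_Icc hY hab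
  exact fun z ↦ differentiableOn_complexMGF.differentiableAt (by simp [this])

lemma integral_pseudoCpow_eq_complexMGF {f : Ω → ℝ} (hf : Measurable f) (hf0 : ∀ ω, 0 ≤ f ω)
    (α : ℂ) :
    ∫ ω, pseudoCpow (f ω) α ∂μ =
      complexMGF (fun ω ↦ Real.log (f ω)) (μ.restrict {ω | f ω ≠ 0}) α := by
  have hS : MeasurableSet {ω | f ω ≠ 0} := (hf (measurableSet_singleton 0)).compl
  rw [complexMGF, ← integral_indicator hS]
  congr 1 with ω
  by_cases h : f ω = 0
  · simp [pseudoCpow, h]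
  · rw [indicator_of_mem h, pseudoCpow, if_neg h, cpow_def_of_ne_zero (ofReal_ne_zero.2 h),
      ← ofReal_log (hf0 ω), mul_comm]

lemma differentiable_integral_pseudoCpow [IsFiniteMeasure μ] {f : Ω → ℝ} {C c : ℝ}
    (hf : Measurable f) (hf0 : ∀ ω, 0 ≤ f ω) (hC : ∀ᵐ ω ∂μ, f ω ≤ C)
    (hc : ∀ᵐ ω ∂μ, (f ω)⁻¹ ≤ c) :
    Differentiable ℂ fun α ↦ ∫ ω, pseudoCpow (f ω) α ∂μ := by
  simp_rw [integral_pseudoCpow_eq_complexMGF hf hf0]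
  have hS : MeasurableSet {ω | f ω ≠ 0} := (hf (measurableSet_singleton 0)).compl
  refine differentiable_complexMGF_of_mem_Icc (a := -Real.log c) (b := Real.log C)
    hf.log.aemeasurable ?_
  rw [ae_restrict_iff' hS]
  filter_upwards [hC, hc] with ω hωC hωc hω
  exact log_mem_Icc_of_le_of_inv_le ((hf0 ω).lt_of_ne' hω) hωC hωc

lemma integral_pseudoCpow_toReal {f : Ω → ℝ≥0∞} (hf : Measurable f) (hf_fin : ∀ᵐ ω ∂μ, f ω < ∞)
    (α : ℝ) :
    ∫ ω, pseudoCpow (f ω).toReal α ∂μ = ((∫⁻ ω in {ω | f ω ≠ 0}, f ω ^ α ∂μ).toReal : ℂ) := by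
  have hS : MeasurableSet {ω | f ω ≠ 0} := (hf (measurableSet_singleton 0)).compl
  have hg_fin : ∀ᵐ ω ∂μ, {ω | f ω ≠ 0}.indicator (fun ω ↦ f ω ^ α) ω < ∞ := by
    filter_upwards [hf_fin] with ω hω
    by_cases h : f ω = 0
    · simp [h]
    · rw [indicator_of_mem h]
      exact (ENNReal.rpow_ne_top_of_nonneg' (pos_iff_ne_zero.2 h) hω.ne).lt_top
  rw [← lintegral_indicator hS,
    ← integral_toReal ((hf.pow_const α).indicator hS).aemeasurable hg_fin,
    ← integral_complex_ofReal]
  refine integral_congr_ae (hf_fin.mono fun ω hω ↦ ?_)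
  simp only [pseudoCpow_toReal_ofReal hω.ne]
  by_cases h : f ω = 0 <;> simp [h]

lemma norm_integral_pseudoCpow_le_rpow [IsProbabilityMeasure μ] {f : Ω → ℝ} {C : ℝ} {α : ℂ}
    (hf0 : ∀ ω, 0 ≤ f ω) (hC : ∀ᵐ ω ∂μ, f ω ≤ C) (hα : 0 ≤ α.re) :
    ‖∫ ω, pseudoCpow (f ω) α ∂μ‖ ≤ C ^ α.re := by
  simpa using norm_integral_le_of_norm_le_const
    (hC.mono fun ω hω ↦ norm_pseudoCpow_le_rpow (hf0 ω) hω hα)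

lemma norm_integral_pseudoCpow_le_inv_rpow [IsProbabilityMeasure μ] {f : Ω → ℝ} {c : ℝ} {α : ℂ}
    (hf0 : ∀ ω, 0 ≤ f ω) (hc : ∀ᵐ ω ∂μ, (f ω)⁻¹ ≤ c) (hα : α.re ≤ 0) :
    ‖∫ ω, pseudoCpow (f ω) α ∂μ‖ ≤ c ^ (-α.re) := by
  simpa using norm_integral_le_of_norm_le_const
    (hc.mono fun ω hω ↦ norm_pseudoCpow_le_inv_rpow (hf0 ω) hω hα)

end

theorem Q_entire_of_bounded_likelihood_ratio_general {X : Type*} [MeasurableSpace X]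
    (p q : Measure X) [IsProbabilityMeasure p] [IsProbabilityMeasure q]
    (C c : ℝ)
    (hC : ∀ᵐ x ∂q, (p.rnDeriv q x).toReal ≤ C)
    (hc : ∀ᵐ x ∂q, ((p.rnDeriv q x).toReal)⁻¹ ≤ c)
    (F : ℂ → ℂ)
    (hF : F = fun α => ∫ x, (if (p.rnDeriv q x).toReal = 0 then 0
            else ((p.rnDeriv q x).toReal : ℂ) ^ α) ∂q) :
    Differentiable ℂ F
    ∧ (∀ α : ℝ, α ≠ 0 → F (α : ℂ)
        = ((∫⁻ x, p.rnDeriv q x ^ α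
              ∂(q.restrict {x | p.rnDeriv q x ≠ 0})).toReal : ℂ))
    ∧ (∀ a b : ℝ, 0 < a →
        ‖F (a + b * Complex.I)‖ ≤ C ^ a ∧ ‖F (-a + b * Complex.I)‖ ≤ c ^ a) := by
  replace hF : F = fun α ↦ ∫ x, pseudoCpow (p.rnDeriv q x).toReal α ∂q := hF
  have hf : Measurable (p.rnDeriv q) := Measure.measurable_rnDeriv p q
  have hf0 : ∀ x, 0 ≤ (p.rnDeriv q x).toReal := fun _ ↦ ENNReal.toReal_nonneg
  subst hF
  refine ⟨differentiable_integral_pseudoCpow hf.ennreal_toReal hf0 hC hc,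
    fun α _ ↦ integral_pseudoCpow_toReal hf (Measure.rnDeriv_lt_top p q) α,
    fun a b ha ↦ ⟨?_, ?_⟩⟩
  · simpa using norm_integral_pseudoCpow_le_rpow (α := a + b * I) hf0 hC (by simpa using ha.le)
  · simpa using norm_integral_pseudoCpow_le_inv_rpow (α := -a + b * I) hf0 hc
      (by simpa using ha.le)

/-- Let `p ≪ q` be probability measures such that the likelihood ratio `dp/dq` and its
pseudo-inverse `(dp/dq)⁻¹` are `q`-essentially bounded (by `C` and `c` respectively).
Then `α ↦ Q_α(p,q) = ∫ (dp/dq)^α dq` extends to an entire function `F` on `ℂ` (defined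
with the pseudo-power convention `0^α = 0`), agreeing with `Q_α` at real `α ≠ 0`, and for
`α = ±a + ib` with `a > 0` one has `‖F(a+ib)‖ ≤ C^a` and `‖F(-a+ib)‖ ≤ c^a`. -/
theorem Q_entire_of_bounded_likelihood_ratio {X : Type*} [MeasurableSpace X]
    (p q : Measure X) [IsProbabilityMeasure p] [IsProbabilityMeasure q]
    (hac : p ≪ q) (C c : ℝ) (hC0 : 0 ≤ C) (hc0 : 0 ≤ c)
    (hC : ∀ᵐ x ∂q, (p.rnDeriv q x).toReal ≤ C)
    (hc : ∀ᵐ x ∂q, ((p.rnDeriv q x).toReal)⁻¹ ≤ c)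
    (F : ℂ → ℂ)
    (hF : F = fun α => ∫ x, (if (p.rnDeriv q x).toReal = 0 then 0
            else ((p.rnDeriv q x).toReal : ℂ) ^ α) ∂q) :
    Differentiable ℂ F
    ∧ (∀ α : ℝ, α ≠ 0 → F (α : ℂ)
        = ((∫⁻ x, p.rnDeriv q x ^ α
              ∂(q.restrict {x | p.rnDeriv q x ≠ 0})).toReal : ℂ))
    ∧ (∀ a b : ℝ, 0 < a →
        ‖F (a + b * Complex.I)‖ ≤ C ^ a ∧ ‖F (-a + b * Complex.I)‖ ≤ c ^ a) :=
  Q_entire_of_bounded_likelihood_ratio_general p q C c hC hc F hF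
end

section
/- Let ρ ≪ σ be finite-dimensional density matrices with ρ pure and [ρ,σ] ≠ 0. Then there exist no probability measures p ≪ q with (dp/dq)^{±1} ∈ L^∞(q) such that D_α(p,q) = D^min_α(ρ,σ) for all α in a nonempty open subinterval of (1,∞). -/
/-!
Write `σ = ∑ sᵢ |eᵢ⟩⟨eᵢ|` and `wᵢ = |⟨eᵢ, ψ⟩|²`. Since `ρ = |ψ⟩⟨ψ|` has rank one, the sandwiched
trace is `(∑ wᵢ sᵢ^((1-α)/α))^α`. On the classical side `∫ (dp/dq)^α dq` is the moment generating
function of the bounded variable `log (dp/dq)` under `p`, evaluated at `α - 1`; it is real-analytic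
on all of `ℝ`, so agreement on an interval propagates to all `α > 0`.

Non-commutativity gives two eigenvalues of `σ` that carry weight. If `S` is the largest of them and
`W` its weight, the quantum trace is `S^(1-α) (W + E α)^α`, where the contribution
`E α = ∑ wᵢ (sᵢ/S)^((1-α)/α)` of the smaller eigenvalues is positive but decays like `exp (-δ/α)`
as `α → 0⁺`. Dividing the analytic continuation by `S^(1-α) W^α` and subtracting `1` therefore
yields a function that is analytic at `0` and positive for `α > 0`, yet `O(αⁿ)` as `α → 0⁺` for
every `n`: impossible.
-/

open MeasureTheory Matrix
open scoped ENNReal ComplexOrder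

open Filter Asymptotics Topology ProbabilityTheory

theorem AnalyticAt.eventually_eq_zero_of_forall_isBigO_pow {𝕜 E : Type*}
    [NontriviallyNormedField 𝕜] [NormedAddCommGroup E] [NormedSpace 𝕜 E]
    {f : 𝕜 → E} {z₀ : 𝕜} {l : Filter 𝕜} [l.NeBot] (hl : l ≤ 𝓝[≠] z₀)
    (hf : AnalyticAt 𝕜 f z₀) (hflat : ∀ n : ℕ, f =O[l] fun z ↦ (z - z₀) ^ n) :
    ∀ᶠ z in 𝓝 z₀, f z = 0 := by
  by_contra hne
  obtain ⟨n, g, hg, hg₀, hfg⟩ := hf.exists_eventuallyEq_pow_smul_nonzero_iff.mpr hne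
  have hl' : l ≤ 𝓝 z₀ := hl.trans nhdsWithin_le_nhds
  have hpow : ∀ᶠ z in l, (z - z₀) ^ n ≠ 0 := by
    filter_upwards [hl self_mem_nhdsWithin] with z hz
    exact pow_ne_zero n (sub_ne_zero.mpr hz)
  have hg_bigO : g =O[l] fun z ↦ z - z₀ := by
    refine ((isBigO_refl (fun z ↦ ((z - z₀) ^ n)⁻¹) l).smul (hflat (n + 1))).congr' ?_ ?_
    · filter_upwards [hl' hfg, hpow] with z hz hz₀
      rw [hz, smul_smul, inv_mul_cancel₀ hz₀, one_smul]
    · filter_upwards [hpow] with z hz₀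
      rw [smul_eq_mul, pow_succ, ← mul_assoc, inv_mul_cancel₀ hz₀, one_mul]
  have hg_tendsto : Tendsto g l (𝓝 0) :=
    hg_bigO.trans_tendsto (by simpa using (tendsto_id.sub_const z₀).mono_left hl')
  exact hg₀ (tendsto_nhds_unique (hg.continuousAt.tendsto.mono_left hl') hg_tendsto)

theorem AnalyticAt.rpow {f g : ℝ → ℝ} {x : ℝ} (hf : AnalyticAt ℝ f x) (hg : AnalyticAt ℝ g x)
    (hfx : 0 < f x) : AnalyticAt ℝ (fun y ↦ f y ^ g y) x := by
  refine (((hf.log hfx).mul hg).rexp).congr ?_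
  filter_upwards [continuousAt_const.eventually_lt hf.continuousAt hfx] with y hy
  rw [Real.rpow_def_of_pos hy]
  rfl

theorem isLittleO_rpow_one_sub_div_nhdsGT_zero {u : ℝ} (hu₀ : 0 < u) (hu₁ : u < 1) (n : ℕ) :
    (fun x : ℝ ↦ u ^ ((1 - x) / x)) =o[𝓝[>] 0] fun x ↦ x ^ n := by
  have ha : 0 < -Real.log u := neg_pos.mpr (Real.log_neg hu₀ hu₁)
  have h := ((isLittleO_exp_neg_mul_rpow_atTop ha (-n)).comp_tendsto
    tendsto_inv_nhdsGT_zero).const_mul_left u⁻¹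
  refine h.congr' ?_ ?_
  · filter_upwards [self_mem_nhdsWithin] with x (hx : 0 < x)
    rw [Function.comp_apply, sub_div, div_self hx.ne', one_div, Real.rpow_sub hu₀, Real.rpow_one,
      Real.rpow_def_of_pos hu₀, neg_neg, div_eq_mul_inv, mul_comm]
  · filter_upwards [self_mem_nhdsWithin] with x (hx : 0 < x)
    simp

theorem mul_rpow_nonneg_of_ne_zero {a b : ℝ} (ha : 0 ≤ a) (hb : a ≠ 0 → 0 < b) (t : ℝ) :
    0 ≤ a * b ^ t := by
  rcases ha.eq_or_lt with rfl | ha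
  · simp
  · exact mul_nonneg ha.le (Real.rpow_nonneg (hb ha.ne').le t)

section PureSandwichedTrace

variable {ι : Type*} [Fintype ι]

/-- `tr[(σ^((1-α)/2α) |ψ⟩⟨ψ| σ^((1-α)/2α))^α]` when `σ` has eigenvalues `s` and `ψ` has squared
coefficients `w` in the eigenbasis of `σ` (`Matrix.PosSemidef.re_trace_cfc_rpow_sandwich`). -/
noncomputable def pureSandwichedTrace (w s : ι → ℝ) (α : ℝ) : ℝ :=
  (∑ i, w i * s i ^ ((1 - α) / α)) ^ α

section Normalized

variable {w u : ι → ℝ} (hw : ∀ i, 0 ≤ w i) (hu : ∀ i, w i ≠ 0 → u i ∈ Set.Ioc 0 1)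
  (hone : ∑ i with u i = 1, w i = 1)

include hone in
theorem sum_mul_rpow_eq_one_add (t : ℝ) :
    ∑ i, w i * u i ^ t = 1 + ∑ i with u i ≠ 1, w i * u i ^ t := by
  rw [← Finset.sum_filter_add_sum_filter_not _ (fun i ↦ u i = 1)]
  congr 1
  refine (Finset.sum_congr rfl fun i hi ↦ ?_).trans hone
  rw [(Finset.mem_filter.mp hi).2, Real.one_rpow, mul_one]

include hw hu hone

theorem pureSandwichedTrace_sub_one_isBigO (n : ℕ) :
    (fun α ↦ pureSandwichedTrace w u α - 1) =O[𝓝[>] 0] fun α ↦ α ^ n := by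
  set E := fun α : ℝ ↦ ∑ i with u i ≠ 1, w i * u i ^ ((1 - α) / α)
  have hE_nonneg : ∀ α, 0 ≤ E α := fun α ↦
    Finset.sum_nonneg fun i _ ↦ mul_rpow_nonneg_of_ne_zero (hw i) (fun h ↦ (hu i h).1) _
  have hE : E =O[𝓝[>] 0] fun α ↦ α ^ n := by
    refine IsBigO.fun_sum fun i hi ↦ ?_
    rcases eq_or_ne (w i) 0 with h | h
    · simpa [h] using isBigO_zero (fun α : ℝ ↦ α ^ n) _
    · exact (isLittleO_rpow_one_sub_div_nhdsGT_zero (hu i h).1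
        ((hu i h).2.lt_of_ne (Finset.mem_filter.mp hi).2) n).isBigO.const_mul_left (w i)
  refine (IsBigO.of_bound (g := E) 1 ?_).trans hE
  filter_upwards [Ioo_mem_nhdsGT (zero_lt_one' ℝ)] with α hα
  have h1 : 1 ≤ 1 + E α := le_add_of_nonneg_right (hE_nonneg α)
  have hle : (1 + E α) ^ α ≤ 1 + E α := by
    simpa using Real.rpow_le_rpow_of_exponent_le h1 hα.2.le
  rw [pureSandwichedTrace, sum_mul_rpow_eq_one_add hone, Real.norm_eq_abs, Real.norm_eq_abs,
    one_mul, abs_of_nonneg (sub_nonneg.mpr (Real.one_le_rpow h1 hα.1.le)),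
    abs_of_nonneg (hE_nonneg α)]
  linarith

theorem one_lt_pureSandwichedTrace (hne : ∃ i, w i ≠ 0 ∧ u i ≠ 1) {α : ℝ} (hα : 0 < α) :
    1 < pureSandwichedTrace w u α := by
  obtain ⟨i, hwi, hui⟩ := hne
  have hE : 0 < ∑ i with u i ≠ 1, w i * u i ^ ((1 - α) / α) :=
    Finset.sum_pos' (fun j _ ↦ mul_rpow_nonneg_of_ne_zero (hw j) (fun h ↦ (hu j h).1) _)
      ⟨i, Finset.mem_filter.mpr ⟨Finset.mem_univ i, hui⟩,
        mul_pos ((hw i).lt_of_ne' hwi) (Real.rpow_pos_of_pos (hu i hwi).1 _)⟩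
  rw [pureSandwichedTrace, sum_mul_rpow_eq_one_add hone]
  exact Real.one_lt_rpow (lt_add_of_pos_right 1 hE) hα

theorem not_eventuallyEq_mul_pureSandwichedTrace (hne : ∃ i, w i ≠ 0 ∧ u i ≠ 1)
    {B Z : ℝ → ℝ} (hB : AnalyticAt ℝ B 0) (hB₀ : B 0 ≠ 0) (hZ : AnalyticAt ℝ Z 0) :
    ¬ Z =ᶠ[𝓝[>] 0] fun α ↦ B α * pureSandwichedTrace w u α := by
  intro hZB
  set g := fun α ↦ Z α / B α - 1
  have hg : AnalyticAt ℝ g 0 := (hZ.div hB hB₀).sub analyticAt_const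
  have hgw : g =ᶠ[𝓝[>] 0] fun α ↦ pureSandwichedTrace w u α - 1 := by
    filter_upwards [hZB, nhdsWithin_le_nhds (hB.continuousAt.eventually_ne hB₀)] with α hα hBα
    simp only [g, hα, mul_div_cancel_left₀ _ hBα]
  have hg_zero := hg.eventually_eq_zero_of_forall_isBigO_pow (nhdsGT_le_nhdsNE 0) fun n ↦ by
    simpa using hgw.trans_isBigO (pureSandwichedTrace_sub_one_isBigO hw hu hone n)
  obtain ⟨α, hα, hgα, hgwα⟩ := (eventually_mem_nhdsWithin.and
    ((hg_zero.filter_mono nhdsWithin_le_nhds).and hgw)).exists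
  linarith [one_lt_pureSandwichedTrace hw hu hone hne (show (0 : ℝ) < α from hα)]

end Normalized

variable {w s : ι → ℝ} (hw : ∀ i, 0 ≤ w i) (hs : ∀ i, w i ≠ 0 → 0 < s i)
include hw hs

theorem sum_mul_rpow_pos (hne : ∃ i, w i ≠ 0) (t : ℝ) : 0 < ∑ i, w i * s i ^ t := by
  obtain ⟨i, hi⟩ := hne
  exact Finset.sum_pos' (fun j _ ↦ mul_rpow_nonneg_of_ne_zero (hw j) (hs j) t)
    ⟨i, Finset.mem_univ i, mul_pos ((hw i).lt_of_ne' hi) (Real.rpow_pos_of_pos (hs i hi) t)⟩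

theorem pureSandwichedTrace_pos (hne : ∃ i, w i ≠ 0) (α : ℝ) : 0 < pureSandwichedTrace w s α :=
  Real.rpow_pos_of_pos (sum_mul_rpow_pos hw hs hne _) α

theorem analyticAt_pureSandwichedTrace (hne : ∃ i, w i ≠ 0) {α : ℝ} (hα : 0 < α) :
    AnalyticAt ℝ (pureSandwichedTrace w s) α := by
  have hexp : AnalyticAt ℝ (fun β : ℝ ↦ (1 - β) / β) α :=
    (analyticAt_const.sub analyticAt_id).div analyticAt_id hα.ne'
  have hsum : AnalyticAt ℝ (fun β ↦ ∑ i, w i * s i ^ ((1 - β) / β)) α := by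
    refine Finset.analyticAt_fun_sum _ fun i _ ↦ ?_
    rcases eq_or_ne (w i) 0 with h | h
    · simpa [h] using analyticAt_const
    · exact analyticAt_const.mul (analyticAt_const.rpow hexp (hs i h))
  exact hsum.rpow analyticAt_id (sum_mul_rpow_pos hw hs hne _)

theorem pureSandwichedTrace_smul_left {c : ℝ} (hc : 0 ≤ c) (α : ℝ) :
    pureSandwichedTrace (c • w) s α = c ^ α * pureSandwichedTrace w s α := by
  simp only [pureSandwichedTrace, Pi.smul_apply, smul_eq_mul, mul_assoc, ← Finset.mul_sum,
    Real.mul_rpow hc (Finset.sum_nonneg fun i _ ↦ mul_rpow_nonneg_of_ne_zero (hw i) (hs i) _)]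

theorem pureSandwichedTrace_smul_right {c : ℝ} (hc : 0 < c) {α : ℝ} (hα : α ≠ 0) :
    pureSandwichedTrace w (c • s) α = c ^ (1 - α) * pureSandwichedTrace w s α := by
  have hterm : ∀ i, w i * (c • s) i ^ ((1 - α) / α)
      = c ^ ((1 - α) / α) * (w i * s i ^ ((1 - α) / α)) := fun i ↦ by
    rcases eq_or_ne (w i) 0 with h | h
    · simp [h]
    · rw [Pi.smul_apply, smul_eq_mul, Real.mul_rpow hc.le (hs i h).le, mul_left_comm]
  simp only [pureSandwichedTrace, hterm, ← Finset.mul_sum]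
  rw [Real.mul_rpow (Real.rpow_nonneg hc.le _)
      (Finset.sum_nonneg fun i _ ↦ mul_rpow_nonneg_of_ne_zero (hw i) (hs i) _),
    ← Real.rpow_mul hc.le, div_mul_cancel₀ _ hα]

theorem not_eventuallyEq_pureSandwichedTrace (hne : ∃ i j, w i ≠ 0 ∧ w j ≠ 0 ∧ s i ≠ s j)
    {Z : ℝ → ℝ} (hZ : AnalyticAt ℝ Z 0) : ¬ Z =ᶠ[𝓝[>] 0] pureSandwichedTrace w s := by
  obtain ⟨i, j, hwi, hwj, hsij⟩ := hne
  obtain ⟨k, hk, hmax⟩ :=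
    (Finset.univ.filter (w · ≠ 0)).exists_max_image s ⟨i, by simpa using hwi⟩
  have hwk : w k ≠ 0 := (Finset.mem_filter.mp hk).2
  set S := s k
  have hS : 0 < S := hs k hwk
  set u := S⁻¹ • s
  have hu : ∀ i, w i ≠ 0 → u i ∈ Set.Ioc 0 1 := fun i hi ↦
    ⟨by simpa [u] using mul_pos (inv_pos.mpr hS) (hs i hi),
      by simpa [u, inv_mul_le_one₀ hS] using hmax i (by simpa using hi)⟩
  have hu_eq_one : ∀ i, u i = 1 ↔ s i = S := fun i ↦ by
    simp [u, inv_mul_eq_one₀ hS.ne', eq_comm]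
  set W := ∑ i with u i = 1, w i
  have hW : 0 < W := Finset.sum_pos' (fun i _ ↦ hw i)
    ⟨k, by simp [hu_eq_one, S], (hw k).lt_of_ne' hwk⟩
  set v := W⁻¹ • w
  have hv : ∀ i, 0 ≤ v i := fun i ↦ mul_nonneg (inv_nonneg.mpr hW.le) (hw i)
  have hv_ne : ∀ i, w i ≠ 0 → v i ≠ 0 := fun i hi ↦ mul_ne_zero (inv_ne_zero hW.ne') hi
  have hvu : ∀ i, v i ≠ 0 → u i ∈ Set.Ioc 0 1 := fun i hi ↦ hu i (right_ne_zero_of_mul hi)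
  have hvone : ∑ i with u i = 1, v i = 1 := by
    simp only [v, Pi.smul_apply, smul_eq_mul, ← Finset.mul_sum, inv_mul_cancel₀ hW.ne', W]
  have hvne : ∃ i, v i ≠ 0 ∧ u i ≠ 1 := by
    by_cases h : s i = S
    · exact ⟨j, hv_ne j hwj, fun h' ↦ hsij (h.trans ((hu_eq_one j).mp h').symm)⟩
    · exact ⟨i, hv_ne i hwi, fun h' ↦ h ((hu_eq_one i).mp h')⟩
  have hscale : ∀ α, 0 < α → pureSandwichedTrace w s α
      = S ^ (1 - α) * W ^ α * pureSandwichedTrace v u α := fun α hα ↦ by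
    have hvS : ∀ i, v i ≠ 0 → 0 < (S • u) i := fun i hi ↦ mul_pos hS (hvu i hi).1
    rw [show w = W • v from (smul_inv_smul₀ hW.ne' w).symm,
      show s = S • u from (smul_inv_smul₀ hS.ne' s).symm,
      pureSandwichedTrace_smul_left hv hvS hW.le,
      pureSandwichedTrace_smul_right hv (fun i hi ↦ (hvu i hi).1) hS hα.ne']
    ring
  have hB : AnalyticAt ℝ (fun α : ℝ ↦ S ^ (1 - α) * W ^ α) 0 :=
    (analyticAt_const.rpow (analyticAt_const.sub analyticAt_id) hS).mul
      (analyticAt_const.rpow analyticAt_id hW)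
  intro hZs
  refine not_eventuallyEq_mul_pureSandwichedTrace hv hvu hvone hvne hB (by simp [hS.ne']) hZ ?_
  filter_upwards [hZs, self_mem_nhdsWithin] with α hα (hα₀ : 0 < α)
  rw [hα, hscale α hα₀]

theorem not_eqOn_pureSandwichedTrace (hne : ∃ i j, w i ≠ 0 ∧ w j ≠ 0 ∧ s i ≠ s j) {Z : ℝ → ℝ}
    (hZ : AnalyticOnNhd ℝ Z (Set.Ici 0)) {a b : ℝ} (ha : 0 < a) (hab : a < b) :
    ¬ Set.EqOn Z (pureSandwichedTrace w s) (Set.Ioo a b) := by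
  intro hZs
  have hQ : AnalyticOnNhd ℝ (pureSandwichedTrace w s) (Set.Ioi 0) := fun α hα ↦
    analyticAt_pureSandwichedTrace hw hs (hne.imp fun _ ⟨_, hi, _⟩ ↦ hi) hα
  have hmid : (a + b) / 2 ∈ Set.Ioo a b := ⟨by linarith, by linarith⟩
  have hEq : Set.EqOn Z (pureSandwichedTrace w s) (Set.Ioi 0) :=
    (hZ.mono Set.Ioi_subset_Ici_self).eqOn_of_preconnected_of_eventuallyEq hQ isPreconnected_Ioi
      (ha.trans hmid.1) (Filter.eventually_of_mem (isOpen_Ioo.mem_nhds hmid) hZs)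
  exact not_eventuallyEq_pureSandwichedTrace hw hs hne (hZ 0 Set.self_mem_Ici)
    (eventually_nhdsWithin_of_forall hEq)

end PureSandwichedTrace

section Spectral

variable {𝕜 n : Type*} [RCLike 𝕜] [Fintype n] {A : Matrix n n 𝕜}

namespace Matrix.IsHermitian

theorem commute_vecMulVec_of_mulVec_eq_smul (hA : A.IsHermitian) {ψ : n → 𝕜} {μ : ℝ}
    (h : A *ᵥ ψ = μ • ψ) : Commute A (vecMulVec ψ (star ψ)) := by
  have h' : star ψ ᵥ* A = μ • star ψ := by
    rw [← hA.eq, ← star_mulVec, h, star_smul, star_trivial]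
  rw [Commute, SemiconjBy, mul_vecMulVec, vecMulVec_mul, h, h', smul_vecMulVec, vecMulVec_smul]

variable [DecidableEq n]

theorem isHermitian_cfc (hA : A.IsHermitian) (f : ℝ → ℝ) : (hA.cfc f).IsHermitian := by
  rw [← hA.cfc_eq]
  exact cfc_predicate f A

theorem trace_cfc (hA : A.IsHermitian) (f : ℝ → ℝ) :
    (hA.cfc f).trace = ∑ i, (f (hA.eigenvalues i) : 𝕜) := by
  rw [IsHermitian.cfc, Unitary.conjStarAlgAut_apply, trace_mul_cycle, Unitary.coe_star_mul_self,
    one_mul, trace_diagonal]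
  rfl

theorem cfc_mulVec (hA : A.IsHermitian) (f : ℝ → ℝ) (ψ : n → 𝕜) :
    hA.cfc f *ᵥ ψ = (hA.eigenvectorUnitary : Matrix n n 𝕜) *ᵥ
      (diagonal (RCLike.ofReal ∘ f ∘ hA.eigenvalues) *ᵥ
        (star (hA.eigenvectorUnitary : Matrix n n 𝕜) *ᵥ ψ)) := by
  simp [IsHermitian.cfc, mulVec_mulVec, mul_assoc]

theorem eigenvalues_eq_zero_or_eq_of_mul_self_eq_smul (hA : A.IsHermitian) {t : ℝ}
    (h : A * A = t • A) (i : n) : hA.eigenvalues i = 0 ∨ hA.eigenvalues i = t := by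
  have he : ⇑(hA.eigenvectorBasis i) ≠ 0 :=
    (WithLp.ofLp_eq_zero 2).ne.2 (hA.eigenvectorBasis.orthonormal.ne_zero i)
  have h' := congrArg (· *ᵥ ⇑(hA.eigenvectorBasis i)) h
  simp only [← mulVec_mulVec, hA.mulVec_eigenvectorBasis, mulVec_smul, smul_mulVec,
    smul_smul] at h'
  rw [or_comm, ← mul_eq_mul_left_iff, mul_comm _ t]
  exact smul_left_injective ℝ he h'

theorem re_trace_cfc_rpow_of_eq_vecMulVec (hA : A.IsHermitian) {φ : n → 𝕜}
    (hφ : A = vecMulVec φ (star φ)) {α : ℝ} (hα : α ≠ 0) :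
    RCLike.re (hA.cfc (· ^ α)).trace = RCLike.re (star φ ⬝ᵥ φ) ^ α := by
  set T := RCLike.re (star φ ⬝ᵥ φ)
  have hT : star φ ⬝ᵥ φ = (T : 𝕜) :=
    (RCLike.conj_eq_iff_re.mp (star_dotProduct φ φ).symm).symm
  have hsq : A * A = T • A := by
    rw [hφ, vecMulVec_mul_vecMulVec, hT, vecMulVec_smul, RCLike.real_smul_eq_coe_smul (K := 𝕜)]
  have hsum : ∑ i, hA.eigenvalues i = T := by
    have h := hA.trace_eq_sum_eigenvalues
    rw [show A.trace = T by rw [hφ, trace_vecMulVec, dotProduct_comm, hT]] at h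
    exact_mod_cast h.symm
  have hdich := hA.eigenvalues_eq_zero_or_eq_of_mul_self_eq_smul hsq
  rw [trace_cfc, map_sum]
  simp only [RCLike.ofReal_re]
  rcases eq_or_ne T 0 with h0 | h0
  · have hzero : ∀ i, hA.eigenvalues i = 0 := fun i ↦ (hdich i).elim id (·.trans h0)
    simp [hzero, h0, Real.zero_rpow hα]
  · calc ∑ i, hA.eigenvalues i ^ α = ∑ i, T ^ (α - 1) * hA.eigenvalues i := by
          refine Finset.sum_congr rfl fun i _ ↦ ?_
          rcases hdich i with h | h
          · rw [h, Real.zero_rpow hα, mul_zero]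
          · rw [h, Real.rpow_sub_one h0, div_mul_cancel₀ _ h0]
      _ = T ^ α := by rw [← Finset.mul_sum, hsum, Real.rpow_sub_one h0, div_mul_cancel₀ _ h0]

noncomputable def spectralWeight (hA : A.IsHermitian) (ψ : n → 𝕜) (i : n) : ℝ :=
  ‖(star (hA.eigenvectorUnitary : Matrix n n 𝕜) *ᵥ ψ) i‖ ^ 2

theorem re_dotProduct_cfc_mulVec (hA : A.IsHermitian) (f : ℝ → ℝ) (ψ : n → 𝕜) :
    RCLike.re (star (hA.cfc f *ᵥ ψ) ⬝ᵥ (hA.cfc f *ᵥ ψ))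
      = ∑ i, f (hA.eigenvalues i) ^ 2 * hA.spectralWeight ψ i := by
  rw [cfc_mulVec, star_mulVec, dotProduct_mulVec, vecMul_vecMul, ← star_eq_conjTranspose,
    Unitary.coe_star_mul_self, vecMul_one, dotProduct, map_sum]
  refine Finset.sum_congr rfl fun i _ ↦ ?_
  simp only [Pi.star_apply, mulVec_diagonal, Function.comp_apply, star_mul', RCLike.star_def,
    RCLike.conj_ofReal, spectralWeight]
  rw [mul_mul_mul_comm, RCLike.conj_mul, ← RCLike.ofReal_mul, ← RCLike.ofReal_pow,
    ← RCLike.ofReal_mul, RCLike.ofReal_re]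
  ring

theorem spectralWeight_eq_zero_of_eigenvalues_eq_zero (hA : A.IsHermitian) {ψ : n → 𝕜}
    (hker : ∀ x, A *ᵥ x = 0 → vecMulVec ψ (star ψ) *ᵥ x = 0) {i : n}
    (hi : hA.eigenvalues i = 0) : hA.spectralWeight ψ i = 0 := by
  have hcoord : (star (hA.eigenvectorUnitary : Matrix n n 𝕜) *ᵥ ψ) i
      = star (star ψ ⬝ᵥ ⇑(hA.eigenvectorBasis i)) := by
    simp [mulVec, dotProduct, star_apply, mul_comm]
  have h := hker _ (by rw [hA.mulVec_eigenvectorBasis, hi, zero_smul])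
  rw [vecMulVec_mulVec, smul_eq_zero, MulOpposite.op_eq_zero_iff] at h
  rcases h with h | h
  · simp [spectralWeight, hcoord, h]
  · simp [spectralWeight, h]

theorem exists_spectralWeight_ne_zero_of_not_commute (hA : A.IsHermitian) {ψ : n → 𝕜}
    (h : ¬ Commute A (vecMulVec ψ (star ψ))) :
    ∃ i j, hA.spectralWeight ψ i ≠ 0 ∧ hA.spectralWeight ψ j ≠ 0 ∧
      hA.eigenvalues i ≠ hA.eigenvalues j := by
  by_contra! hall
  obtain ⟨μ, hμ⟩ : ∃ μ : ℝ, ∀ i, hA.spectralWeight ψ i ≠ 0 → hA.eigenvalues i = μ := by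
    by_cases hex : ∃ i, hA.spectralWeight ψ i ≠ 0
    · obtain ⟨i₀, hi₀⟩ := hex
      exact ⟨hA.eigenvalues i₀, fun i hi ↦ hall i i₀ hi hi₀⟩
    · exact ⟨0, fun i hi ↦ absurd hi (not_not.mpr (not_exists_not.mp hex i))⟩
  set U := (hA.eigenvectorUnitary : Matrix n n 𝕜)
  have hdiag : diagonal (RCLike.ofReal ∘ hA.eigenvalues) *ᵥ (star U *ᵥ ψ)
      = μ • (star U *ᵥ ψ) := by
    ext k
    rw [mulVec_diagonal, Pi.smul_apply]
    by_cases hk : (star U *ᵥ ψ) k = 0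
    · simp [hk]
    · rw [Function.comp_apply, hμ k (by simpa [spectralWeight] using hk),
        RCLike.real_smul_eq_coe_mul]
  refine h (commute_vecMulVec_of_mulVec_eq_smul hA (μ := μ) ?_)
  conv_lhs => rw [hA.spectral_theorem]
  rw [Unitary.conjStarAlgAut_apply, ← mulVec_mulVec, ← mulVec_mulVec, hdiag, mulVec_smul,
    mulVec_mulVec, Unitary.mul_star_self_of_mem (SetLike.coe_mem _), one_mulVec]

end Matrix.IsHermitian

theorem Matrix.PosSemidef.re_trace_cfc_rpow_sandwich [DecidableEq n] {σ : Matrix n n 𝕜}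
    (hσ : σ.PosSemidef) (ψ : n → 𝕜) {N : Matrix n n 𝕜} (hN : N.IsHermitian) {α : ℝ}
    (hα : α ≠ 0)
    (hNdef : N = hσ.1.cfc (fun x : ℝ ↦ x ^ ((1 - α) / (2 * α))) * vecMulVec ψ (star ψ)
      * hσ.1.cfc (fun x : ℝ ↦ x ^ ((1 - α) / (2 * α)))) :
    RCLike.re (hN.cfc (fun x : ℝ ↦ x ^ α)).trace
      = pureSandwichedTrace (hσ.1.spectralWeight ψ) hσ.1.eigenvalues α := by
  have hB := hσ.1.isHermitian_cfc (fun x : ℝ ↦ x ^ ((1 - α) / (2 * α)))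
  set B := hσ.1.cfc (fun x : ℝ ↦ x ^ ((1 - α) / (2 * α)))
  have hφ : N = vecMulVec (B *ᵥ ψ) (star (B *ᵥ ψ)) := by
    rw [hNdef, mul_vecMulVec, vecMulVec_mul, star_mulVec, hB.eq]
  rw [hN.re_trace_cfc_rpow_of_eq_vecMulVec hφ hα, hσ.1.re_dotProduct_cfc_mulVec,
    pureSandwichedTrace]
  congr 1
  refine Finset.sum_congr rfl fun i _ ↦ ?_
  rw [mul_comm, ← Real.rpow_two, ← Real.rpow_mul (hσ.eigenvalues_nonneg i)]
  congr 2
  field_simp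

end Spectral

theorem ProbabilityTheory.analyticAt_mgf_of_ae_mem_Icc {Ω : Type*} [MeasurableSpace Ω]
    {μ : Measure Ω} [IsFiniteMeasure μ] {X : Ω → ℝ} {a b : ℝ} (hX : AEMeasurable X μ)
    (hab : ∀ᵐ ω ∂μ, X ω ∈ Set.Icc a b) (t : ℝ) : AnalyticAt ℝ (mgf X μ) t := by
  refine analyticAt_mgf ?_
  rw [show integrableExpSet X μ = Set.univ from
    Set.eq_univ_of_forall fun _ ↦ integrable_exp_mul_of_mem_Icc hX hab, interior_univ]
  exact Set.mem_univ t

section LikelihoodRatio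

variable {Y : Type*} [MeasurableSpace Y] {p q : Measure Y} [SigmaFinite p]
  [p.HaveLebesgueDecomposition q]

theorem toReal_lintegral_rnDeriv_rpow_eq_mgf (hpq : p ≪ q) {α : ℝ} (hα : 0 < α) :
    (∫⁻ x, p.rnDeriv q x ^ α ∂q).toReal
      = mgf (fun x ↦ Real.log (p.rnDeriv q x).toReal) p (α - 1) := by
  have hchange : ∫⁻ x, p.rnDeriv q x ^ α ∂q = ∫⁻ x, p.rnDeriv q x ^ (α - 1) ∂p := by
    rw [← lintegral_rnDeriv_mul hpq (by fun_prop)]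
    refine lintegral_congr_ae ?_
    filter_upwards [Measure.rnDeriv_lt_top p q] with x hx
    rcases eq_or_ne (p.rnDeriv q x) 0 with h0 | h0
    · -- `0 ^ (α - 1)` may be `⊤`, but `0 * ⊤ = 0` in `ℝ≥0∞`
      simp [h0, ENNReal.zero_rpow_of_pos hα]
    · conv_lhs => rw [← add_sub_cancel 1 α, ENNReal.rpow_add _ _ h0 hx.ne, ENNReal.rpow_one]
  have hpos := Measure.rnDeriv_pos hpq
  have hfin := hpq.ae_le (Measure.rnDeriv_lt_top p q)
  rw [hchange, ← integral_toReal (by fun_prop) ?_, mgf]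
  · refine integral_congr_ae ?_
    filter_upwards [hpos, hfin] with x h0 htop
    rw [← ENNReal.toReal_rpow, Real.rpow_def_of_pos (ENNReal.toReal_pos h0.ne' htop.ne), mul_comm]
  · filter_upwards [hpos, hfin] with x h0 htop
    exact (ENNReal.rpow_ne_top_of_ne_zero h0.ne' htop.ne).lt_top

theorem ae_log_toReal_rnDeriv_mem_Icc (hpq : p ≪ q) {C c : ℝ}
    (hC : ∀ᵐ x ∂q, (p.rnDeriv q x).toReal ≤ C) (hc : ∀ᵐ x ∂q, ((p.rnDeriv q x).toReal)⁻¹ ≤ c) :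
    ∀ᵐ x ∂p, Real.log (p.rnDeriv q x).toReal ∈ Set.Icc (-Real.log c) (Real.log C) := by
  filter_upwards [hpq.ae_le hC, hpq.ae_le hc, Measure.rnDeriv_pos hpq,
    hpq.ae_le (Measure.rnDeriv_lt_top p q)] with x hxC hxc h0 htop
  have hpos : 0 < (p.rnDeriv q x).toReal := ENNReal.toReal_pos h0.ne' htop.ne
  refine ⟨?_, Real.log_le_log hpos hxC⟩
  rw [neg_le, ← Real.log_inv]
  exact Real.log_le_log (inv_pos.mpr hpos) hxc

end LikelihoodRatio

theorem no_classical_simulation_pure_noncommuting_general {d : ℕ}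
    (ψ : Fin d → ℂ)
    (ρ : Matrix (Fin d) (Fin d) ℂ) (hρ : ρ = Matrix.vecMulVec ψ (star ψ))
    (σ : Matrix (Fin d) (Fin d) ℂ) (hσ : σ.PosSemidef)
    (hac : ∀ w : Fin d → ℂ, σ.mulVec w = 0 → ρ.mulVec w = 0)
    (hcomm : ρ * σ ≠ σ * ρ)
    (M : ℝ → Matrix (Fin d) (Fin d) ℂ)
    (hMdef : ∀ α : ℝ, M α
      = hσ.1.cfc (fun x : ℝ => x ^ ((1 - α) / (2 * α))) * ρ
          * hσ.1.cfc (fun x : ℝ => x ^ ((1 - α) / (2 * α))))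
    (hM : ∀ α : ℝ, (M α).IsHermitian) :
    ¬ ∃ (Y : Type) (_ : MeasurableSpace Y) (p q : Measure Y),
        IsProbabilityMeasure p ∧ IsProbabilityMeasure q ∧ p ≪ q ∧
        (∃ C : ℝ, ∀ᵐ x ∂q, (p.rnDeriv q x).toReal ≤ C) ∧
        (∃ c : ℝ, ∀ᵐ x ∂q, ((p.rnDeriv q x).toReal)⁻¹ ≤ c) ∧
        ∃ a b : ℝ, 1 ≤ a ∧ a < b ∧ ∀ α ∈ Set.Ioo a b,
          (α - 1)⁻¹ * Real.log (∫⁻ x, p.rnDeriv q x ^ α ∂q).toReal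
            = (α - 1)⁻¹ * Real.log (((hM α).cfc (fun x : ℝ => x ^ α)).trace.re) := by
  rintro ⟨Y, _, p, q, hp, hq, hpq, ⟨C, hC⟩, ⟨c, hc⟩, a, b, ha, hab, heq⟩
  set s := hσ.1.eigenvalues
  set w := hσ.1.spectralWeight ψ
  have hw : ∀ i, 0 ≤ w i := fun i ↦ sq_nonneg _
  have hws : ∀ i, w i ≠ 0 → 0 < s i := fun i hi ↦ (hσ.eigenvalues_nonneg i).lt_of_ne' fun h ↦
    hi (hσ.1.spectralWeight_eq_zero_of_eigenvalues_eq_zero (hρ ▸ hac) h)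
  have hne := hσ.1.exists_spectralWeight_ne_zero_of_not_commute fun h ↦ hcomm (hρ ▸ h.eq.symm)
  set X := fun x ↦ Real.log (p.rnDeriv q x).toReal
  have hX := ae_log_toReal_rnDeriv_mem_Icc hpq hC hc
  have hXm : AEMeasurable X p := by fun_prop
  refine not_eqOn_pureSandwichedTrace hw hws hne (Z := fun α ↦ mgf X p (α - 1))
    (fun α _ ↦ (analyticAt_mgf_of_ae_mem_Icc hXm hX _).comp (analyticAt_id.sub analyticAt_const))
    (zero_lt_one.trans_le ha) hab fun α hα ↦ ?_
  have hα₁ : 1 < α := ha.trans_lt hα.1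
  have htrace : ((hM α).cfc (fun x : ℝ ↦ x ^ α)).trace.re = pureSandwichedTrace w s α :=
    hσ.re_trace_cfc_rpow_sandwich ψ (hM α) (by linarith) (hρ ▸ hMdef α)
  have h := heq α hα
  rw [toReal_lintegral_rnDeriv_rpow_eq_mgf hpq (by linarith), htrace] at h
  exact Real.log_injOn_pos (mgf_pos (integrable_exp_mul_of_mem_Icc hXm hX))
    (pureSandwichedTrace_pos hw hws (hne.imp fun _ ⟨_, hi, _⟩ ↦ hi) α)
    (mul_left_cancel₀ (inv_ne_zero (sub_ne_zero.mpr hα₁.ne')) h)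

/-- **No classical simulation of the sandwiched Rényi divergence for non-commuting
pure-state dichotomies.** Let `ρ = |ψ⟩⟨ψ| ≪ σ` be finite-dimensional density matrices
with `ρ` pure and `[ρ,σ] ≠ 0`. Then there are no probability measures `p ≪ q` whose
likelihood ratio and its pseudo-inverse are essentially bounded, such that the classical
Rényi divergence `D_α(p,q)` equals the sandwiched divergence
`D^min_α(ρ,σ) = (α-1)⁻¹ log tr[(σ^{(1-α)/(2α)} ρ σ^{(1-α)/(2α)})^α]` for all `α` in a
nonempty open subinterval of `(1,∞)`. -/
theorem no_classical_simulation_pure_noncommuting {d : ℕ}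
    (ψ : Fin d → ℂ) (hψn : star ψ ⬝ᵥ ψ = 1)
    (ρ : Matrix (Fin d) (Fin d) ℂ) (hρ : ρ = Matrix.vecMulVec ψ (star ψ))
    (σ : Matrix (Fin d) (Fin d) ℂ) (hσ : σ.PosSemidef) (hσtr : σ.trace = 1)
    (hac : ∀ w : Fin d → ℂ, σ.mulVec w = 0 → ρ.mulVec w = 0)
    (hcomm : ρ * σ ≠ σ * ρ)
    (M : ℝ → Matrix (Fin d) (Fin d) ℂ)
    (hMdef : ∀ α : ℝ, M α
      = hσ.1.cfc (fun x : ℝ => x ^ ((1 - α) / (2 * α))) * ρ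
          * hσ.1.cfc (fun x : ℝ => x ^ ((1 - α) / (2 * α))))
    (hM : ∀ α : ℝ, (M α).IsHermitian) :
    ¬ ∃ (Y : Type) (_ : MeasurableSpace Y) (p q : Measure Y),
        IsProbabilityMeasure p ∧ IsProbabilityMeasure q ∧ p ≪ q ∧
        (∃ C : ℝ, ∀ᵐ x ∂q, (p.rnDeriv q x).toReal ≤ C) ∧
        (∃ c : ℝ, ∀ᵐ x ∂q, ((p.rnDeriv q x).toReal)⁻¹ ≤ c) ∧
        ∃ a b : ℝ, 1 ≤ a ∧ a < b ∧ ∀ α ∈ Set.Ioo a b,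
          (α - 1)⁻¹ * Real.log (∫⁻ x, p.rnDeriv q x ^ α ∂q).toReal
            = (α - 1)⁻¹ * Real.log (((hM α).cfc (fun x : ℝ => x ^ α)).trace.re) :=
  no_classical_simulation_pure_noncommuting_general ψ ρ hρ σ hσ hac hcomm M hMdef hM
end

section
/- Let σ be a 3×3 diagonal density matrix with three distinct eigenvalues, and let ρ = (1/6)·[[2, i, i], [-i, 2, i], [-i, -i, 2]] (in the eigenbasis of σ). Then there exists no unitary U with UρU* = ρ̄ and UσU* = σ, where ρ̄ is the entrywise complex conjugate of ρ. -/
open Matrix Complex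

/-- Let `σ` be a `3×3` diagonal density matrix with three distinct eigenvalues, and let
`ρ = (1/6)·[[2, i, i], [-i, 2, i], [-i, -i, 2]]` (written in the eigenbasis of `σ`).
Then there is no unitary `U` with `U ρ U* = ρ̄` and `U σ U* = σ`, where `ρ̄` is the
entrywise complex conjugate of `ρ`. -/
theorem no_unitary_conjugating_to_conjugate
    (dvec : Fin 3 → ℝ) (hdinj : Function.Injective dvec)
    (hdpos : ∀ i, 0 ≤ dvec i) (hdsum : ∑ i, dvec i = 1)
    (σ : Matrix (Fin 3) (Fin 3) ℂ) (hσ : σ = Matrix.diagonal (fun i => (dvec i : ℂ)))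
    (ρ : Matrix (Fin 3) (Fin 3) ℂ)
    (hρ : ρ = (1/6 : ℂ) •
      !![2, Complex.I, Complex.I; -Complex.I, 2, Complex.I; -Complex.I, -Complex.I, 2]) :
    ¬ ∃ U : Matrix (Fin 3) (Fin 3) ℂ,
        U * Uᴴ = 1 ∧ Uᴴ * U = 1 ∧
        U * ρ * Uᴴ = ρ.map (starRingEnd ℂ) ∧ U * σ * Uᴴ = σ := by
  intro ⟨U, h1, h2, h3, h4⟩
  subst hσ hρ
  have hcomm : U * Matrix.diagonal (fun i => (dvec i : ℂ))
      = Matrix.diagonal (fun i => (dvec i : ℂ)) * U := by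
    have := congrArg (· * U) h4
    simpa [Matrix.mul_assoc, h2] using this
  have hoff : ∀ i j, i ≠ j → U i j = 0 := by
    intro i j hij
    have hc := congrFun (congrFun hcomm i) j
    rw [Matrix.mul_diagonal, Matrix.diagonal_mul] at hc
    have hd : (dvec j : ℂ) ≠ (dvec i : ℂ) := by
      simpa using fun h => hij (hdinj h).symm
    have hz : U i j * ((dvec j : ℂ) - dvec i) = 0 := by linear_combination hc
    rcases mul_eq_zero.mp hz with h | h
    · exact h
    · exact absurd (by linear_combination h) hd
  have h01 : U 0 1 = 0 := hoff 0 1 (by decide)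
  have h02 : U 0 2 = 0 := hoff 0 2 (by decide)
  have h10 : U 1 0 = 0 := hoff 1 0 (by decide)
  have h12 : U 1 2 = 0 := hoff 1 2 (by decide)
  have h20 : U 2 0 = 0 := hoff 2 0 (by decide)
  have h21 : U 2 1 = 0 := hoff 2 1 (by decide)
  have hb : U 1 1 * (starRingEnd ℂ) (U 1 1) = 1 := by
    have := congrFun (congrFun h1 1) 1
    simpa [Matrix.mul_apply, Matrix.conjTranspose_apply, Fin.sum_univ_three,
      h10, h12] using this
  have e01 := congrFun (congrFun h3 0) 1
  have e12 := congrFun (congrFun h3 1) 2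
  have e02 := congrFun (congrFun h3 0) 2
  simp [Matrix.mul_apply, Matrix.conjTranspose_apply, Fin.sum_univ_three,
    Matrix.map_apply, h01, h02, h10, h12, h20, h21] at e01 e12 e02
  have hc6 : (starRingEnd ℂ) (6:ℂ) = 6 := map_ofNat _ 6
  rw [hc6] at e01 e12 e02
  have contra : (-2:ℂ) * (6⁻¹ * Complex.I)^2 = 0 := by
    linear_combination (U 1 1 * (starRingEnd ℂ) (U 2 2) * (6⁻¹ * Complex.I)) * e01
      - (U 0 0 * (starRingEnd ℂ) (U 2 2) * (6⁻¹ * Complex.I)^2) * hb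
      - (6⁻¹ * Complex.I) * e12 - (6⁻¹ * Complex.I) * e02
  simp [mul_pow, Complex.I_sq] at contra
end

section
/- Let p_i^∥ ≪ q_i and p_i^⊥ ⊥ q_i be probability measures on measure spaces X_i (i = 1,2), and suppose there are stochastic maps interconverting (p₁^∥, q₁) with (p₂^∥, q₂). Then for every λ ∈ [0,1] there are stochastic maps interconverting (λp₁^∥ + (1-λ)p₁^⊥, q₁) with (λp₂^∥ + (1-λ)p₂^⊥, q₂). -/
open MeasureTheory ProbabilityTheory
open scoped ENNReal

namespace ProbabilityTheory.Kernel

variable {X Y : Type*} [MeasurableSpace X] [MeasurableSpace Y] {s : Set X}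
  [DecidablePred (· ∈ s)] (hs : MeasurableSet s) (κ η : Kernel X Y) {μ : Measure X}

lemma bind_piecewise_of_ae_mem (h : ∀ᵐ x ∂μ, x ∈ s) :
    μ.bind (piecewise hs κ η) = μ.bind κ :=
  Measure.bind_congr_right (h.mono fun x hx => by simp [piecewise_apply, hx])

lemma bind_piecewise_of_ae_notMem (h : ∀ᵐ x ∂μ, x ∉ s) :
    μ.bind (piecewise hs κ η) = μ.bind η :=
  Measure.bind_congr_right (h.mono fun x hx => by simp [piecewise_apply, hx])

end ProbabilityTheory.Kernel

lemma exists_isMarkovKernel_bind_eq_of_mutuallySingular {X Y : Type*} [MeasurableSpace X]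
    [MeasurableSpace Y] {p pperp q : Measure X} (ν : Measure Y) [IsProbabilityMeasure pperp]
    [IsProbabilityMeasure ν] (hac : p ≪ q) (hsing : pperp ⟂ₘ q) (κ : Kernel X Y)
    [IsMarkovKernel κ] :
    ∃ κ' : Kernel X Y, IsMarkovKernel κ' ∧
      p.bind κ' = p.bind κ ∧ q.bind κ' = q.bind κ ∧ pperp.bind κ' = ν := by
  classical
  obtain ⟨s, hs, hps, hqs⟩ := hsing
  have hq : ∀ᵐ x ∂q, x ∈ s := mem_ae_iff.2 hqs
  refine ⟨Kernel.piecewise hs κ (Kernel.const X ν), inferInstance,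
    Kernel.bind_piecewise_of_ae_mem hs _ _ (hac.ae_le hq),
    Kernel.bind_piecewise_of_ae_mem hs _ _ hq, ?_⟩
  rw [Kernel.bind_piecewise_of_ae_notMem hs _ _ (measure_eq_zero_iff_ae_notMem.1 hps)]
  simp

theorem interconvertible_of_lebesgue_mixture_general {X₁ X₂ : Type*}
    [MeasurableSpace X₁] [MeasurableSpace X₂]
    (ppar₁ pperp₁ q₁ : Measure X₁) (ppar₂ pperp₂ q₂ : Measure X₂)
    [IsProbabilityMeasure pperp₁] [IsProbabilityMeasure pperp₂]
    (hac₁ : ppar₁ ≪ q₁) (hsing₁ : pperp₁ ⟂ₘ q₁)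
    (hac₂ : ppar₂ ≪ q₂) (hsing₂ : pperp₂ ⟂ₘ q₂)
    (h : ∃ (T : Kernel X₁ X₂) (R : Kernel X₂ X₁),
      IsMarkovKernel T ∧ IsMarkovKernel R ∧
      ppar₁.bind T = ppar₂ ∧ q₁.bind T = q₂ ∧
      ppar₂.bind R = ppar₁ ∧ q₂.bind R = q₁)
    (l : ℝ) :
    ∃ (T : Kernel X₁ X₂) (R : Kernel X₂ X₁),
      IsMarkovKernel T ∧ IsMarkovKernel R ∧
      (ENNReal.ofReal l • ppar₁ + ENNReal.ofReal (1 - l) • pperp₁).bind T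
        = ENNReal.ofReal l • ppar₂ + ENNReal.ofReal (1 - l) • pperp₂ ∧
      q₁.bind T = q₂ ∧
      (ENNReal.ofReal l • ppar₂ + ENNReal.ofReal (1 - l) • pperp₂).bind R
        = ENNReal.ofReal l • ppar₁ + ENNReal.ofReal (1 - l) • pperp₁ ∧
      q₂.bind R = q₁ := by
  obtain ⟨T, R, hT, hR, hTpar, hTq, hRpar, hRq⟩ := h
  obtain ⟨T', hT', hT'par, hT'q, hT'perp⟩ :=
    exists_isMarkovKernel_bind_eq_of_mutuallySingular pperp₂ hac₁ hsing₁ T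
  obtain ⟨R', hR', hR'par, hR'q, hR'perp⟩ :=
    exists_isMarkovKernel_bind_eq_of_mutuallySingular pperp₁ hac₂ hsing₂ R
  refine ⟨T', R', hT', hR', ?_, hT'q.trans hTq, ?_, hR'q.trans hRq⟩
  · rw [Measure.comp_add, Measure.comp_smul, Measure.comp_smul, hT'par, hTpar, hT'perp]
  · rw [Measure.comp_add, Measure.comp_smul, Measure.comp_smul, hR'par, hRpar, hR'perp]

/-- Let `pᵢ^∥ ≪ qᵢ` and `pᵢ^⊥ ⊥ qᵢ` be probability measures on `Xᵢ` (`i = 1,2`), and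
suppose there are stochastic maps (Markov kernels) interconverting `(p₁^∥, q₁)` with
`(p₂^∥, q₂)`. Then for every `λ ∈ [0,1]` there are stochastic maps interconverting
`(λ p₁^∥ + (1-λ) p₁^⊥, q₁)` with `(λ p₂^∥ + (1-λ) p₂^⊥, q₂)`. -/
theorem interconvertible_of_lebesgue_mixture {X₁ X₂ : Type*}
    [MeasurableSpace X₁] [MeasurableSpace X₂]
    (ppar₁ pperp₁ q₁ : Measure X₁) (ppar₂ pperp₂ q₂ : Measure X₂)
    [IsProbabilityMeasure ppar₁] [IsProbabilityMeasure pperp₁] [IsProbabilityMeasure q₁]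
    [IsProbabilityMeasure ppar₂] [IsProbabilityMeasure pperp₂] [IsProbabilityMeasure q₂]
    (hac₁ : ppar₁ ≪ q₁) (hsing₁ : pperp₁ ⟂ₘ q₁)
    (hac₂ : ppar₂ ≪ q₂) (hsing₂ : pperp₂ ⟂ₘ q₂)
    (h : ∃ (T : Kernel X₁ X₂) (R : Kernel X₂ X₁),
      IsMarkovKernel T ∧ IsMarkovKernel R ∧
      ppar₁.bind T = ppar₂ ∧ q₁.bind T = q₂ ∧
      ppar₂.bind R = ppar₁ ∧ q₂.bind R = q₁)
    (l : ℝ) (hl0 : 0 ≤ l) (hl1 : l ≤ 1) :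
    ∃ (T : Kernel X₁ X₂) (R : Kernel X₂ X₁),
      IsMarkovKernel T ∧ IsMarkovKernel R ∧
      (ENNReal.ofReal l • ppar₁ + ENNReal.ofReal (1 - l) • pperp₁).bind T
        = ENNReal.ofReal l • ppar₂ + ENNReal.ofReal (1 - l) • pperp₂ ∧
      q₁.bind T = q₂ ∧
      (ENNReal.ofReal l • ppar₂ + ENNReal.ofReal (1 - l) • pperp₂).bind R
        = ENNReal.ofReal l • ppar₁ + ENNReal.ofReal (1 - l) • pperp₁ ∧
      q₂.bind R = q₁ :=
  interconvertible_of_lebesgue_mixture_general ppar₁ pperp₁ q₁ ppar₂ pperp₂ q₂ hac₁ hsing₁ hac₂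
    hsing₂ h l
end
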